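/- arXiv:1902.02231 — 8 statements merged into one kernel-verified Lean document; each statement's English description precedes it below -/
import Mathlib

section
/- If G is a minor-obstruction for the class of k-apex sub-unicyclic graphs, then G has no bridges. -/
open SimpleGraph

/-- A graph is sub-unicyclic if it contains at most one cycle:
any two cycles have the same edge set. -/
def SubUnicyclic {V : Type} (G : SimpleGraph V) : Prop :=
  ∀ ⦃u w : V⦄ (c : G.Walk u u) (c' : G.Walk w w),
    c.IsCycle → c'.IsCycle → ∀ e, e ∈ c.edges ↔ e ∈ c'.edges

/-- `H` is a minor of `G`: branch decomposition via a partial map. -/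
def IsMinor {W V : Type} (H : SimpleGraph W) (G : SimpleGraph V) : Prop :=
  ∃ f : V → Option W,
    (∀ w : W, (G.induce {v | f v = some w}).Connected) ∧
    (∀ w₁ w₂ : W, H.Adj w₁ w₂ →
      ∃ v₁ v₂ : V, f v₁ = some w₁ ∧ f v₂ = some w₂ ∧ G.Adj v₁ v₂)

/-- `G` is `k`-apex sub-unicyclic. -/
def KApexSub (k : ℕ) {V : Type} (G : SimpleGraph V) : Prop :=
  ∃ S : Set V, S.ncard ≤ k ∧ SubUnicyclic (G.induce Sᶜ)

/-- `G` is a minor-obstruction for the class of `k`-apex sub-unicyclic graphs. -/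
def ObstructionSub (k : ℕ) {V : Type} (G : SimpleGraph V) : Prop :=
  ¬ KApexSub k G ∧
  ∀ (W : Type) (H : SimpleGraph W), IsMinor H G → ¬ IsMinor G H → KApexSub k H

/-- A pseudoforest: every connected component is sub-unicyclic. -/
def Pseudoforest {V : Type} (G : SimpleGraph V) : Prop :=
  ∀ C : G.ConnectedComponent, SubUnicyclic (G.induce C.supp)

def KApexPseudo (k : ℕ) {V : Type} (G : SimpleGraph V) : Prop :=
  ∃ S : Set V, S.ncard ≤ k ∧ Pseudoforest (G.induce Sᶜ)

def ObstructionPseudo (k : ℕ) {V : Type} (G : SimpleGraph V) : Prop :=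
  ¬ KApexPseudo k G ∧
  ∀ (W : Type) (H : SimpleGraph W), IsMinor H G → ¬ IsMinor G H → KApexPseudo k H

/-- The disjoint union of two triangles. -/
def twoK3 : SimpleGraph (Fin 6) :=
  SimpleGraph.fromRel (fun a b => a.val / 3 = b.val / 3)

/-- `K₄` minus an edge. -/
def K4minus : SimpleGraph (Fin 4) :=
  (⊤ : SimpleGraph (Fin 4)).deleteEdges {s(0, 1)}

/-- The butterfly graph: two triangles `{0,1,2}` and `{2,3,4}` sharing the center `2`. -/
def butterfly : SimpleGraph (Fin 5) :=
  SimpleGraph.fromRel (fun a b =>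
    (a.val ≤ 1 ∧ b.val ≤ 1) ∨ (3 ≤ a.val ∧ 3 ≤ b.val) ∨ a = 2 ∨ b = 2)

def butterflyCenter : Fin 5 := 2

/-- The disjoint union of `n` triangles. -/
def kTriangles (n : ℕ) : SimpleGraph (Fin n × Fin 3) :=
  SimpleGraph.fromRel (fun a b => a.1 = b.1)

/-- Attach a fresh butterfly to `G` by identifying one of its extremal vertices with `v`.
New vertices: `inr 0` (extremal, same triangle as `v`), `inr 1` (center),
`inr 2`, `inr 3` (extremal, second triangle). -/
def attachButterfly {V : Type} (G : SimpleGraph V) (v : V) : SimpleGraph (V ⊕ Fin 4) :=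
  SimpleGraph.fromRel (fun a b =>
    (∃ x y : V, a = Sum.inl x ∧ b = Sum.inl y ∧ G.Adj x y) ∨
    (a = Sum.inl v ∧ b = Sum.inr 0) ∨ (a = Sum.inl v ∧ b = Sum.inr 1) ∨
    (a = Sum.inr 0 ∧ b = Sum.inr 1) ∨ (a = Sum.inr 2 ∧ b = Sum.inr 3) ∨
    (a = Sum.inr 2 ∧ b = Sum.inr 1) ∨ (a = Sum.inr 3 ∧ b = Sum.inr 1))

/-- The class `Z_k` of `k`-butterfly-cacti, together with its set of central vertices. -/
inductive IsBCactus : ℕ → ∀ {V : Type}, SimpleGraph V → Set V → Prop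
  | base {V : Type} (G : SimpleGraph V) (e : G ≃g butterfly) :
      IsBCactus 1 G {e.symm butterflyCenter}
  | step {V V' : Type} (k : ℕ) (G : SimpleGraph V) (G' : SimpleGraph V') (S' : Set V')
      (v : V') (hv : v ∉ S') (h' : IsBCactus k G' S')
      (e : G ≃g attachButterfly G' v) :
      IsBCactus (k + 1) G (⇑e.symm '' (Sum.inl '' S' ∪ {Sum.inr 1}))

/-- `x` is a cut-vertex of (the connected graph) `G`. -/
def IsCutVertex {V : Type} (G : SimpleGraph V) (x : V) : Prop :=
  ¬ (G.induce {u | u ≠ x}).Preconnected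

def Biconnected {V : Type} (G : SimpleGraph V) : Prop :=
  G.Connected ∧ ∀ x : V, (G.induce {u | u ≠ x}).Connected

/-- `G` is nearly-biconnected: biconnected, or has a unique cut-vertex `x` splitting it
into a biconnected part and a triangle. -/
def NearlyBiconnected {V : Type} (G : SimpleGraph V) : Prop :=
  Biconnected G ∨
  ∃ (x : V) (A B : Set V),
    IsCutVertex G x ∧ (∀ y, IsCutVertex G y → y = x) ∧
    A ∪ B = Set.univ ∧ A ∩ B = {x} ∧
    (∀ a ∈ A, ∀ b ∈ B, G.Adj a b → a = x ∨ b = x) ∧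
    Biconnected (G.induce A) ∧
    Nonempty (G.induce B ≃g (⊤ : SimpleGraph (Fin 3)))

/-- `B` is (the vertex set of) a block of `G`: a maximal connected set with no cut-vertex. -/
def IsBlockSet {V : Type} (G : SimpleGraph V) (B : Set V) : Prop :=
  B.Nonempty ∧ (G.induce B).Connected ∧
  (∀ x : V, (G.induce (B \ {x})).Preconnected) ∧
  ∀ B' : Set V, B ⊆ B' → (G.induce B').Connected →
    (∀ x : V, (G.induce (B' \ {x})).Preconnected) → B' = B

/-- A cactus graph: no `K₄⁻` minor. -/
def IsCactus {V : Type} (G : SimpleGraph V) : Prop := ¬ IsMinor K4minus G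

/-- The chain of four consecutively glued triangles
`{0,1,2}, {2,3,4}, {4,5,6}, {6,7,8}`. -/
def O11 : SimpleGraph (Fin 9) :=
  SimpleGraph.fromRel (fun a b => ∃ i : Fin 4,
    2 * i.val ≤ a.val ∧ a.val ≤ 2 * i.val + 2 ∧ 2 * i.val ≤ b.val ∧ b.val ≤ 2 * i.val + 2)

/-!
Deleting a bridge `e` yields a minor `G - e` with fewer edges, so `G` is not a minor of it and
`G - e` is `k`-apex sub-unicyclic by minimality. A bridge lies on no cycle, so every cycle of
`G - S` is already a cycle of `(G - e) - S`, and the apex set `S` that works for `G - e` also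
works for `G`.
-/

theorem isMinor_of_le {V : Type} {H G : SimpleGraph V} (h : H ≤ G) : IsMinor H G := by
  refine ⟨some, fun w => ?_, fun w₁ w₂ hadj => ⟨w₁, w₂, rfl, rfl, h hadj⟩⟩
  have : Subsingleton {v | some v = some w} :=
    ⟨fun a b => Subtype.ext (Option.some_injective _ (a.2.trans b.2.symm))⟩
  exact (connected_iff _).2 ⟨Preconnected.of_subsingleton, ⟨⟨w, rfl⟩⟩⟩

theorem IsMinor.ncard_edgeSet_le {W V : Type} [Finite V] {H : SimpleGraph W}
    {G : SimpleGraph V} (h : IsMinor H G) : H.edgeSet.ncard ≤ G.edgeSet.ncard := by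
  obtain ⟨f, -, hadj⟩ := h
  have hsub : Sym2.map some '' H.edgeSet ⊆ Sym2.map f '' G.edgeSet := by
    rintro _ ⟨a, ha, rfl⟩
    induction a using Sym2.ind with
    | _ w₁ w₂ =>
      obtain ⟨v₁, v₂, h₁, h₂, hv⟩ := hadj w₁ w₂ ha
      exact ⟨s(v₁, v₂), hv, by simp [h₁, h₂]⟩
  calc H.edgeSet.ncard
      = (Sym2.map some '' H.edgeSet).ncard :=
        (Set.ncard_image_of_injective _ (Sym2.map.injective (Option.some_injective W))).symm
    _ ≤ (Sym2.map f '' G.edgeSet).ncard := Set.ncard_le_ncard hsub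
    _ ≤ G.edgeSet.ncard := Set.ncard_image_le

theorem not_isMinor_deleteEdges {V : Type} [Finite V] {G : SimpleGraph V} {e : Sym2 V}
    (he : e ∈ G.edgeSet) : ¬ IsMinor G (G.deleteEdges {e}) := by
  intro h
  have hlt : (G.deleteEdges {e}).edgeSet.ncard < G.edgeSet.ncard := by
    rw [edgeSet_deleteEdges]
    exact Set.ncard_sdiff_singleton_lt_of_mem he
  exact h.ncard_edgeSet_le.not_gt hlt

theorem SubUnicyclic.of_cycle_edges_mem {V : Type} {G H : SimpleGraph V}
    (hcyc : ∀ ⦃u⦄ (c : G.Walk u u), c.IsCycle → ∀ a ∈ c.edges, a ∈ H.edgeSet)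
    (hH : SubUnicyclic H) : SubUnicyclic G := by
  intro u w c c' hc hc' a
  simpa only [Walk.edges_transfer] using
    hH (c.transfer H (hcyc c hc)) (c'.transfer H (hcyc c' hc')) (hc.transfer _) (hc'.transfer _) a

theorem SimpleGraph.IsBridge.cycle_edges_induce_mem_deleteEdges {V : Type} {G : SimpleGraph V}
    {e : Sym2 V} (hbr : G.IsBridge e) (s : Set V) ⦃u : s⦄ (c : (G.induce s).Walk u u)
    (hc : c.IsCycle) : ∀ a ∈ c.edges, a ∈ ((G.deleteEdges {e}).induce s).edgeSet := by
  intro a ha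
  have hne : Sym2.map Subtype.val a ≠ e := by
    rintro rfl
    refine hbr.notMem_edges_of_isCycle (hc.map (f := (Embedding.induce s).toHom)
      Subtype.val_injective) ?_
    rw [Walk.edges_map]
    exact List.mem_map_of_mem ha
  have hadj := c.edges_subset_edgeSet ha
  induction a using Sym2.ind with
  | _ x y => simpa [deleteEdges_adj] using ⟨hadj, hne⟩

theorem kApexSub_of_deleteEdges_isBridge {V : Type} {k : ℕ} {G : SimpleGraph V} {e : Sym2 V}
    (hbr : G.IsBridge e) (h : KApexSub k (G.deleteEdges {e})) : KApexSub k G := by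
  obtain ⟨S, hS, hsub⟩ := h
  exact ⟨S, hS, hsub.of_cycle_edges_mem (hbr.cycle_edges_induce_mem_deleteEdges Sᶜ)⟩

/-- a minor-obstruction for `k`-apex sub-unicyclic graphs has no bridges. -/
theorem obstruction_no_bridge {V : Type} [Finite V] (k : ℕ) (G : SimpleGraph V)
    (h : ObstructionSub k G) : ∀ e ∈ G.edgeSet, ¬ G.IsBridge e := by
  intro e he hbr
  have hdel : KApexSub k (G.deleteEdges {e}) :=
    h.2 V _ (isMinor_of_le (G.deleteEdges_le {e})) (not_isMinor_deleteEdges he)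
  exact h.1 (kApexSub_of_deleteEdges_isBridge hbr hdel)
end

section
/- If G is a minor-obstruction for the class of k-apex sub-unicyclic graphs and v is a vertex of G of degree 2, then the two neighbors of v are adjacent. -/
open SimpleGraph

/-!
If the neighbours `a`, `b` of `v` were not adjacent, contracting `va` (delete `v`, add the edge
`ab`) gives a proper minor `H` of `G`, so some set `S` of at most `k` vertices leaves `H - S` with
at most one cycle. The same `S` works for `G`: a cycle of `G - S` avoiding `v` is a cycle of
`H - S`, and one through `a v b` becomes a cycle of `H - S` through `ab`. As `a` and `b` are not
adjacent in `G`, each cycle of `G - S` can be read back from the edge set of its image, so two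
cycles of `G - S` have the same edges.
-/

namespace SimpleGraph.Walk

variable {V : Type} {G : SimpleGraph V}

theorem IsCycle.exists_split_at_start {x : V} {c : G.Walk x x} (hc : c.IsCycle) :
    ∃ y z, G.Adj x y ∧ G.Adj x z ∧ y ≠ z ∧ ∃ r : G.Walk z y, r.IsPath ∧ x ∉ r.support ∧
      ∀ e, e ∈ c.edges ↔ e = s(x, y) ∨ e = s(x, z) ∨ e ∈ r.edges := by
  cases c with
  | nil => exact absurd hc not_isCycle_nil
  | @cons _ y _ hxy p =>
    obtain ⟨hp, hxyp⟩ := (cons_isCycle_iff p hxy).mp hc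
    obtain ⟨z, hxz, r, hpr⟩ := exists_eq_cons_of_ne hxy.ne p.reverse
    have hp' : p.reverse.IsPath := hp.reverse
    rw [hpr, cons_isPath_iff] at hp'
    have hpe : ∀ e, e ∈ p.edges ↔ e = s(x, z) ∨ e ∈ r.edges := fun e => by
      rw [← List.mem_reverse, ← edges_reverse, hpr, edges_cons, List.mem_cons]
    refine ⟨y, z, hxy, hxz, ?_, r, hp'.1, hp'.2, fun e => ?_⟩
    · rintro rfl
      exact hxyp ((hpe _).mpr (Or.inl rfl))
    · rw [edges_cons, List.mem_cons, hpe]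

theorem IsCycle.exists_split_of_mem_support {u x : V} {c : G.Walk u u} (hc : c.IsCycle)
    (hx : x ∈ c.support) :
    ∃ y z, G.Adj x y ∧ G.Adj x z ∧ y ≠ z ∧ ∃ r : G.Walk z y, r.IsPath ∧ x ∉ r.support ∧
      ∀ e, e ∈ c.edges ↔ e = s(x, y) ∨ e = s(x, z) ∨ e ∈ r.edges := by
  classical
  obtain ⟨y, z, hy, hz, hyz, r, hr, hxr, hedges⟩ := (hc.rotate hx).exists_split_at_start
  exact ⟨y, z, hy, hz, hyz, r, hr, hxr,
    fun e => (c.rotate_edges x hx).mem_iff.symm.trans (hedges e)⟩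

theorem mem_edges_iff_exists_mem_edges_induce {s : Set V} {u w : V} (q : G.Walk u w)
    (hq : ∀ x ∈ q.support, x ∈ s) {e : Sym2 V} :
    e ∈ q.edges ↔ ∃ e' ∈ (q.induce s hq).edges, Sym2.map Subtype.val e' = e := by
  have h := congrArg Walk.edges (q.map_induce hq)
  rw [edges_map] at h
  exact h ▸ List.mem_map

theorem map_mem_edges_map_iff {V' : Type} {G' : SimpleGraph V'} {f : G →g G'}
    (hf : Function.Injective f) {u w : V} (q : G.Walk u w) {e : Sym2 V} :
    Sym2.map f e ∈ (q.map f).edges ↔ e ∈ q.edges := by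
  rw [edges_map]
  exact List.mem_map_of_injective (Sym2.map.injective hf)

end SimpleGraph.Walk

section Suppression

open Walk

variable {X Y : Type} {Γ : SimpleGraph X} {M : SimpleGraph Y} {x₀ : X}

/-- The edges of `Γ` that suppressing `x₀` along `f` sends into `D`, where an edge `x₀y` is sent
to each `s(f y, f z)` with `z` another neighbour of `x₀`. -/
def suppressionPreimage (f : Γ.induce {x₀}ᶜ →g M) (D : Set (Sym2 Y)) : Set (Sym2 X) :=
  {e | ∃ e' ∈ (Γ.induce {x₀}ᶜ).edgeSet, Sym2.map Subtype.val e' = e ∧ Sym2.map f e' ∈ D} ∪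
  {e | ∃ y z : ({x₀}ᶜ : Set X), Γ.Adj x₀ y ∧ Γ.Adj x₀ z ∧ y ≠ z ∧ e = s(x₀, ↑y) ∧
    s(f y, f z) ∈ D}

variable {f : Γ.induce {x₀}ᶜ →g M} (hf : Function.Injective f)
  (hnadj : ∀ y z, Γ.Adj x₀ y → Γ.Adj x₀ z → ¬ Γ.Adj y z)

include hf hnadj in
theorem map_ne_pair_of_adj {e : Sym2 ({x₀}ᶜ : Set X)} (he : e ∈ (Γ.induce {x₀}ᶜ).edgeSet)
    {y z : ({x₀}ᶜ : Set X)} (hy : Γ.Adj x₀ y) (hz : Γ.Adj x₀ z) :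
    Sym2.map f e ≠ s(f y, f z) := by
  rw [← Sym2.map_mk]
  intro h
  rw [Sym2.map.injective hf h] at he
  exact hnadj y z hy hz he

include hf hnadj in
theorem pair_notMem_edges_map {u w : ({x₀}ᶜ : Set X)} (q : (Γ.induce {x₀}ᶜ).Walk u w)
    {y z : ({x₀}ᶜ : Set X)} (hy : Γ.Adj x₀ y) (hz : Γ.Adj x₀ z) :
    s(f y, f z) ∉ (q.map f).edges := by
  rw [← Sym2.map_mk, map_mem_edges_map_iff hf]
  exact fun h => hnadj y z hy hz (q.edges_subset_edgeSet h)

variable (hmadj : ∀ y z : ({x₀}ᶜ : Set X), Γ.Adj x₀ y → Γ.Adj x₀ z → y ≠ z → M.Adj (f y) (f z))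

include hf hnadj in
theorem exists_isCycle_edges_eq_of_notMem_support {u : X} {c : Γ.Walk u u} (hc : c.IsCycle)
    (hx : x₀ ∉ c.support) :
    ∃ (w : Y) (d : M.Walk w w), d.IsCycle ∧
      ∀ e, e ∈ c.edges ↔ e ∈ suppressionPreimage f {e | e ∈ d.edges} := by
  have hcs : ∀ x ∈ c.support, x ∈ ({x₀}ᶜ : Set X) := fun x hxc hxx => hx (hxx ▸ hxc)
  set c' := c.induce {x₀}ᶜ hcs
  have hc' : c'.IsCycle := IsCycle.of_map (f := (Embedding.induce _).toHom) (by rwa [map_induce])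
  refine ⟨_, c'.map f, hc'.map hf, fun e => ⟨fun he => ?_, ?_⟩⟩
  · obtain ⟨e', he', rfl⟩ := (mem_edges_iff_exists_mem_edges_induce c hcs).mp he
    exact Or.inl ⟨e', c'.edges_subset_edgeSet he', rfl, (map_mem_edges_map_iff hf c').mpr he'⟩
  · rintro (⟨e', -, rfl, he'⟩ | ⟨y, z, hy, hz, -, -, hyz⟩)
    · exact (mem_edges_iff_exists_mem_edges_induce c hcs).mpr
        ⟨e', (map_mem_edges_map_iff hf c').mp he', rfl⟩
    · exact absurd hyz (pair_notMem_edges_map hf hnadj c' hy hz)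

include hf hnadj hmadj in
theorem exists_isCycle_edges_eq_of_mem_support {u : X} {c : Γ.Walk u u} (hc : c.IsCycle)
    (hx : x₀ ∈ c.support) :
    ∃ (w : Y) (d : M.Walk w w), d.IsCycle ∧
      ∀ e, e ∈ c.edges ↔ e ∈ suppressionPreimage f {e | e ∈ d.edges} := by
  obtain ⟨y, z, hy, hz, hyz, r, hr, hxr, hcr⟩ := hc.exists_split_of_mem_support hx
  lift y to ({x₀}ᶜ : Set X) using hy.ne'
  lift z to ({x₀}ᶜ : Set X) using hz.ne'
  replace hyz : y ≠ z := fun h => hyz (congrArg Subtype.val h)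
  have hrs : ∀ x ∈ r.support, x ∈ ({x₀}ᶜ : Set X) := fun x hxr' hxx => hxr (hxx ▸ hxr')
  have hr' : (r.induce _ hrs).IsPath :=
    IsPath.of_map (f := (Embedding.induce _).toHom) (by rwa [map_induce])
  refine ⟨_, cons (hmadj y z hy hz hyz) ((r.induce _ hrs).map f),
    (cons_isCycle_iff _ _).mpr ⟨hr'.map hf, pair_notMem_edges_map hf hnadj _ hy hz⟩,
    fun e => ?_⟩
  simp only [hcr, suppressionPreimage, Set.mem_union, Set.mem_ofPred_eq, edges_cons,
    List.mem_cons]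
  constructor
  · rintro (rfl | rfl | he)
    · exact Or.inr ⟨y, z, hy, hz, hyz, rfl, Or.inl rfl⟩
    · exact Or.inr ⟨z, y, hz, hy, hyz.symm, rfl, Or.inl Sym2.eq_swap⟩
    · obtain ⟨e', he', rfl⟩ := (mem_edges_iff_exists_mem_edges_induce r hrs).mp he
      exact Or.inl ⟨e', edges_subset_edgeSet _ he', rfl,
        Or.inr ((map_mem_edges_map_iff hf _).mpr he')⟩
  · rintro (⟨e', he'Γ, rfl, h | h⟩ | ⟨y₁, z₁, hy₁, hz₁, -, rfl, h | h⟩)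
    · exact absurd h (map_ne_pair_of_adj hf hnadj he'Γ hy hz)
    · exact Or.inr (Or.inr ((mem_edges_iff_exists_mem_edges_induce r hrs).mpr
        ⟨e', (map_mem_edges_map_iff hf _).mp h, rfl⟩))
    · rw [← Sym2.map_mk, ← Sym2.map_mk] at h
      rcases Sym2.eq_iff.mp (Sym2.map.injective hf h) with ⟨rfl, -⟩ | ⟨rfl, -⟩
      · exact Or.inl rfl
      · exact Or.inr (Or.inl rfl)
    · exact absurd h (pair_notMem_edges_map hf hnadj _ hy₁ hz₁)

include hf hnadj hmadj in
theorem SubUnicyclic.of_suppression (hM : SubUnicyclic M) : SubUnicyclic Γ := by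
  have key : ∀ {u : X} (c : Γ.Walk u u), c.IsCycle → ∃ (w : Y) (d : M.Walk w w), d.IsCycle ∧
      ∀ e, e ∈ c.edges ↔ e ∈ suppressionPreimage f {e | e ∈ d.edges} := fun c hc => by
    by_cases hx : x₀ ∈ c.support
    · exact exists_isCycle_edges_eq_of_mem_support hf hnadj hmadj hc hx
    · exact exists_isCycle_edges_eq_of_notMem_support hf hnadj hc hx
  intro u w c c' hc hc' e
  obtain ⟨_, d, hd, hcd⟩ := key c hc
  obtain ⟨_, d', hd', hcd'⟩ := key c' hc'
  have hdd' : {e | e ∈ d.edges} = {e | e ∈ d'.edges} := Set.ext (hM d d' hd hd')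
  rw [hcd, hcd', hdd']

end Suppression

theorem IsMinor.card_le {W V : Type} [Finite V] {H : SimpleGraph W} {G : SimpleGraph V}
    (h : IsMinor H G) : Nat.card W ≤ Nat.card V := by
  obtain ⟨f, hconn, -⟩ := h
  have hbranch : ∀ w, ∃ u, f u = some w := fun w =>
    let ⟨⟨u, hu⟩⟩ := (hconn w).nonempty
    ⟨u, hu⟩
  choose g hg using hbranch
  refine Nat.card_le_card_of_injective g fun w w' hww' => Option.some_injective _ ?_
  rw [← hg w, ← hg w', hww']

theorem isMinor_induce_compl_sup_edge {V : Type} {G : SimpleGraph V} {v a b : V}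
    (ha : G.Adj v a) (hb : G.Adj v b) : IsMinor ((G ⊔ edge a b).induce {v}ᶜ) G := by
  classical
  let f : V → Option ({v}ᶜ : Set V) := fun u =>
    if hu : u = v then some ⟨a, ha.ne'⟩ else some ⟨u, hu⟩
  have hfv : f v = some ⟨a, ha.ne'⟩ := dif_pos rfl
  have hf : ∀ u (hu : u ≠ v), f u = some ⟨u, hu⟩ := fun u hu => dif_neg hu
  refine ⟨f, fun w => ?_, fun w₁ w₂ hw => ?_⟩
  · by_cases hw : w = ⟨a, ha.ne'⟩
    · have hbranch : {u | f u = some w} = {v, a} := by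
        ext u
        by_cases hu : u = v
        · simp [hu, hfv, hw]
        · simp [hu, hf u hu, hw, Subtype.ext_iff]
      rw [hbranch]
      exact induce_pair_connected_of_adj ha
    · have hbranch : {u | f u = some w} = {w.1} := by
        ext u
        by_cases hu : u = v
        · simpa [hu, hfv, Ne.symm hw] using fun h : v = w.1 => w.2 h.symm
        · simp [hf u hu, Subtype.ext_iff]
      rw [hbranch, induce_singleton_eq_top]
      exact connected_top
  · have hw' : (G ⊔ edge a b).Adj w₁ w₂ := hw
    rw [sup_adj, edge_adj] at hw'
    rcases hw' with h | ⟨⟨h₁, h₂⟩ | ⟨h₁, h₂⟩, -⟩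
    · exact ⟨w₁, w₂, hf _ w₁.2, hf _ w₂.2, h⟩
    · refine ⟨v, w₂, ?_, hf _ w₂.2, h₂ ▸ hb⟩
      rw [hfv]
      exact congrArg some (Subtype.ext h₁.symm)
    · refine ⟨w₁, v, hf _ w₁.2, ?_, h₁ ▸ hb.symm⟩
      rw [hfv]
      exact congrArg some (Subtype.ext h₂.symm)

theorem subUnicyclic_induce_compl_image_of_sup_edge {V : Type} {G : SimpleGraph V} {v a b : V}
    (hN : ∀ x, G.Adj v x → x = a ∨ x = b) (hab : ¬ G.Adj a b) (S : Set ({v}ᶜ : Set V))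
    (hS : SubUnicyclic (((G ⊔ edge a b).induce {v}ᶜ).induce Sᶜ)) :
    SubUnicyclic (G.induce (Subtype.val '' S)ᶜ) := by
  have hvS : v ∈ (Subtype.val '' S)ᶜ := fun ⟨w, _, hw⟩ => w.2 hw
  have hpair : ∀ y z, G.Adj v y → G.Adj v z → y ≠ z → y = a ∧ z = b ∨ y = b ∧ z = a := by
    intro y z hy hz hyz
    rcases hN y hy with rfl | rfl <;> rcases hN z hz with rfl | rfl <;> simp_all
  let f : (G.induce (Subtype.val '' S)ᶜ).induce {⟨v, hvS⟩}ᶜ →g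
      ((G ⊔ edge a b).induce {v}ᶜ).induce Sᶜ :=
    { toFun := fun x => ⟨⟨x.1.1, fun h => x.2 (Subtype.ext h)⟩, fun hx => x.1.2 ⟨_, hx, rfl⟩⟩
      map_rel' := fun h => Or.inl h }
  refine hS.of_suppression (f := f) (fun x y hxy => ?_) (fun y z hy hz hyz => ?_)
    (fun y z hy hz hyz => ?_)
  · exact Subtype.ext (Subtype.ext (congrArg (fun p => p.1.1) hxy))
  · have hG : G.Adj y.1 z.1 := hyz
    rcases hpair _ _ hy hz hG.ne with ⟨rfl, rfl⟩ | ⟨rfl, rfl⟩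
    · exact hab hG
    · exact hab hG.symm
  · have hyz' : y.1.1 ≠ z.1.1 := fun h => hyz (Subtype.ext (Subtype.ext h))
    exact Or.inr ((edge_adj a b _ _).mpr ⟨hpair _ _ hy hz hyz', hyz'⟩)

/-- in a minor-obstruction for `k`-apex sub-unicyclic graphs,
the two neighbors of a degree-2 vertex are adjacent. -/
theorem obstruction_degree_two_neighbors_adjacent {V : Type} [Finite V] (k : ℕ)
    (G : SimpleGraph V) (h : ObstructionSub k G) (v : V)
    (hv : (G.neighborSet v).ncard = 2) :
    ∀ a b : V, G.Adj v a → G.Adj v b → a ≠ b → G.Adj a b := by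
  intro a b ha hb hab
  by_contra hnadj
  have hN : G.neighborSet v = {a, b} :=
    (Set.eq_of_subset_of_ncard_le (t := G.neighborSet v)
      (Set.insert_subset ha (Set.singleton_subset_iff.mpr hb))
      (by rw [hv, Set.ncard_pair hab]) (Set.toFinite _)).symm
  have hminor := isMinor_induce_compl_sup_edge ha hb
  have hproper : ¬ IsMinor G ((G ⊔ edge a b).induce {v}ᶜ) := fun hGH =>
    (Finite.card_subtype_lt (p := (· ∈ ({v}ᶜ : Set V))) (not_not.mpr rfl)).not_ge hGH.card_le
  obtain ⟨S, hSk, hS⟩ := h.2 _ _ hminor hproper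
  refine h.1 ⟨Subtype.val '' S,
    (Set.ncard_image_of_injective S Subtype.val_injective).trans_le hSk,
    subUnicyclic_induce_compl_image_of_sup_edge (fun x hx => ?_) hnadj S hS⟩
  simpa [hN] using (show x ∈ G.neighborSet v from hx)
end

section
/- Every edge and every vertex of a minor-obstruction for the class of k-apex sub-unicyclic graphs lies on a cycle. -/
open SimpleGraph

/-!
Deleting a vertex or an edge of `G` gives a proper minor: minors have no more vertices and no
more edges than the host graph, so `G` is not a minor of the smaller graph. Hence the smaller
graph is `k`-apex sub-unicyclic, via some apex set `S`. If the deleted vertex or edge lay on no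
cycle, every cycle of `G - S` survives in the smaller graph minus `S` with the same edges, so `S`
also witnesses that `G` is `k`-apex sub-unicyclic — a contradiction.
-/

namespace SimpleGraph

open Function

variable {V W : Type} {G : SimpleGraph V}

lemma isMinor_of_injective {H : SimpleGraph W} (φ : H →g G) (hφ : Injective φ) :
    IsMinor H G := by
  classical
  have hinv := hφ.isPartialInv
  refine ⟨partialInv φ, fun w => ?_, fun w₁ w₂ hadj =>
    ⟨φ w₁, φ w₂, hinv.eq w₁, hinv.eq w₂, φ.map_adj hadj⟩⟩
  have hbranch : {v | partialInv φ v = some w} = {φ w} := by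
    ext v
    exact (hinv w v).trans eq_comm
  rw [hbranch]
  exact Connected.of_subsingleton

lemma IsMinor.card_le [Finite V] {H : SimpleGraph W} (h : IsMinor H G) :
    Nat.card W ≤ Nat.card V := by
  obtain ⟨f, hconn, -⟩ := h
  have hrep (w : W) : ∃ v, f v = some w := by
    obtain ⟨⟨v, hv⟩⟩ := (hconn w).nonempty
    exact ⟨v, hv⟩
  choose σ hσ using hrep
  refine Nat.card_le_card_of_injective σ fun w₁ w₂ hσw => ?_
  simpa [hσ] using congrArg f hσw

lemma IsMinor.ncard_edgeSet_le [Finite V] {H : SimpleGraph W} (h : IsMinor H G) :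
    H.edgeSet.ncard ≤ G.edgeSet.ncard := by
  obtain ⟨f, -, hadj⟩ := h
  have hsub : Sym2.map some '' H.edgeSet ⊆ Sym2.map f '' G.edgeSet := by
    rintro _ ⟨e, he, rfl⟩
    induction e with
    | _ w₁ w₂ =>
      obtain ⟨v₁, v₂, h₁, h₂, hv⟩ := hadj w₁ w₂ he
      exact ⟨s(v₁, v₂), hv, by simp [h₁, h₂]⟩
  calc H.edgeSet.ncard
      = (Sym2.map some '' H.edgeSet).ncard :=
        (Set.ncard_image_of_injective _ (Sym2.map.injective (Option.some_injective W))).symm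
    _ ≤ (Sym2.map f '' G.edgeSet).ncard := Set.ncard_le_ncard hsub (Set.toFinite _)
    _ ≤ G.edgeSet.ncard := Set.ncard_image_le (Set.toFinite _)

lemma not_isMinor_induce_ne [Finite V] (v : V) : ¬ IsMinor G (G.induce {u | u ≠ v}) :=
  fun h => h.card_le.not_gt (Finite.card_subtype_lt (x := v) fun hv => hv rfl)

lemma not_isMinor_deleteEdges [Finite V] {e : Sym2 V} (he : e ∈ G.edgeSet) :
    ¬ IsMinor G (G.deleteEdges {e}) := by
  have hlt : (G.deleteEdges {e}).edgeSet ⊂ G.edgeSet := by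
    rw [edgeSet_deleteEdges]
    exact Set.sdiff_singleton_ssubset.2 he
  exact fun h => h.ncard_edgeSet_le.not_gt (Set.ncard_lt_ncard hlt (Set.toFinite _))

namespace Walk

lemma IsCycle.induce {s : Set V} {u : V} {c : G.Walk u u} (hc : c.IsCycle)
    (hs : ∀ x ∈ c.support, x ∈ s) : (c.induce s hs).IsCycle := by
  rw [← isCycle_map_iff_of_injective (f := (Embedding.induce s).toHom) Subtype.val_injective,
    map_induce]
  exact hc

lemma mem_edges_map_iff_of_mem_edges_iff {V' : Type} {G' : SimpleGraph V'} (f : G →g G')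
    {u w : V} {d : G.Walk u u} {d' : G.Walk w w} (h : ∀ e, e ∈ d.edges ↔ e ∈ d'.edges)
    (e : Sym2 V') : e ∈ (d.map f).edges ↔ e ∈ (d'.map f).edges := by
  simp [edges_map, h]

end Walk

open Walk

theorem subUnicyclic_induce_iff {s : Set V} :
    SubUnicyclic (G.induce s) ↔
      ∀ ⦃u w : V⦄ (c : G.Walk u u) (c' : G.Walk w w), c.IsCycle → c'.IsCycle →
        (∀ x ∈ c.support, x ∈ s) → (∀ x ∈ c'.support, x ∈ s) →
        ∀ e, e ∈ c.edges ↔ e ∈ c'.edges := by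
  constructor
  · intro h u w c c' hc hc' hs hs' e
    have := mem_edges_map_iff_of_mem_edges_iff (Embedding.induce s).toHom
      (h _ _ (hc.induce hs) (hc'.induce hs')) e
    rwa [map_induce, map_induce] at this
  · intro h u w c c' hc hc' e
    set ι : G.induce s →g G := (Embedding.induce s).toHom
    have hι : Injective ι := Subtype.val_injective
    have mem_s {v : s} (d : (G.induce s).Walk v v) : ∀ x ∈ (d.map ι).support, x ∈ s := by
      intro x hx
      rw [Walk.support_map] at hx
      obtain ⟨y, -, rfl⟩ := List.mem_map.1 hx
      exact y.2
    have := h _ _ (hc.map hι) (hc'.map hι) (mem_s c) (mem_s c') (Sym2.map ι e)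
    rwa [edges_map, edges_map, List.mem_map_of_injective (Sym2.map.injective hι),
      List.mem_map_of_injective (Sym2.map.injective hι)] at this

theorem subUnicyclic_induce_of_deleteEdges {s : Set V} {F : Set (Sym2 V)}
    (hF : ∀ ⦃u : V⦄ (c : G.Walk u u), c.IsCycle → ∀ e ∈ c.edges, e ∉ F)
    (h : SubUnicyclic ((G.deleteEdges F).induce s)) : SubUnicyclic (G.induce s) := by
  refine subUnicyclic_induce_iff.2 fun u w c c' hc hc' hs hs' e => ?_
  have := subUnicyclic_induce_iff.1 h (c.toDeleteEdges F (hF c hc))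
    (c'.toDeleteEdges F (hF c' hc')) (hc.transfer _) (hc'.transfer _)
    (by simpa using hs) (by simpa using hs') e
  simpa using this

theorem subUnicyclic_induce_compl_image {t : Set V}
    (ht : ∀ ⦃u : V⦄ (c : G.Walk u u), c.IsCycle → ∀ x ∈ c.support, x ∈ t) {S : Set t}
    (h : SubUnicyclic ((G.induce t).induce Sᶜ)) :
    SubUnicyclic (G.induce (Subtype.val '' S)ᶜ) := by
  refine subUnicyclic_induce_iff.2 fun u w c c' hc hc' hs hs' e => ?_
  have lift_mem {v : V} {d : G.Walk v v} (hd : d.IsCycle)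
      (hds : ∀ x ∈ d.support, x ∈ (Subtype.val '' S)ᶜ) :
      ∀ x ∈ (d.induce t (ht d hd)).support, x ∈ Sᶜ := by
    intro x hx hxS
    rw [support_induce, List.mem_attachWith] at hx
    exact hds x hx ⟨x, hxS, rfl⟩
  have := mem_edges_map_iff_of_mem_edges_iff (Embedding.induce t).toHom
    (subUnicyclic_induce_iff.1 h _ _ (hc.induce _) (hc'.induce _)
      (lift_mem hc hs) (lift_mem hc' hs')) e
  rwa [map_induce, map_induce] at this

theorem ObstructionSub.exists_isCycle_mem_edges [Finite V] {k : ℕ} (h : ObstructionSub k G)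
    {e : Sym2 V} (he : e ∈ G.edgeSet) :
    ∃ (u : V) (c : G.Walk u u), c.IsCycle ∧ e ∈ c.edges := by
  by_contra! hno
  obtain ⟨S, hS, hsub⟩ := h.2 _ (G.deleteEdges {e})
    (isMinor_of_injective (.ofLE (G.deleteEdges_le _)) injective_id) (not_isMinor_deleteEdges he)
  refine h.1 ⟨S, hS, subUnicyclic_induce_of_deleteEdges ?_ hsub⟩
  rintro u c hc _ he' rfl
  exact hno u c hc he'

theorem ObstructionSub.exists_isCycle_mem_support [Finite V] {k : ℕ} (h : ObstructionSub k G)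
    (v : V) : ∃ (u : V) (c : G.Walk u u), c.IsCycle ∧ v ∈ c.support := by
  by_contra! hno
  obtain ⟨S, hS, hsub⟩ := h.2 _ (G.induce {u | u ≠ v})
    (isMinor_of_injective (Embedding.induce _).toHom Subtype.val_injective)
    (not_isMinor_induce_ne v)
  refine h.1 ⟨Subtype.val '' S, ?_, subUnicyclic_induce_compl_image ?_ hsub⟩
  · rwa [Set.ncard_image_of_injective _ Subtype.val_injective]
  · rintro u c hc x hx (rfl : x = v)
    exact hno u c hc hx

end SimpleGraph

/-- every vertex and every edge of a minor-obstruction for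
`k`-apex sub-unicyclic graphs lies on a cycle. -/
theorem obstruction_vertices_edges_on_cycles {V : Type} [Finite V] (k : ℕ)
    (G : SimpleGraph V) (h : ObstructionSub k G) :
    (∀ v : V, ∃ (u : V) (c : G.Walk u u), c.IsCycle ∧ v ∈ c.support) ∧
    (∀ e ∈ G.edgeSet, ∃ (u : V) (c : G.Walk u u), c.IsCycle ∧ e ∈ c.edges) :=
  ⟨h.exists_isCycle_mem_support, fun _ => h.exists_isCycle_mem_edges⟩
end

section
/- If G is a connected graph containing some graph from obs(S) = {2K_3, K_4^-, Z} as a minor, then G contains K_4^- or the butterfly graph Z as a minor. -/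
open SimpleGraph

/-! A connected graph with a `2K₃` model contains a path from the branch sets of one triangle to
those of the other whose inner vertices lie in no branch set. Merging the two end branch sets
with that path into a single branch set glues the two triangles at one vertex: a butterfly. -/

namespace SimpleGraph.Walk

variable {V : Type} {G : SimpleGraph V}

theorem exists_walk_inner_not_mem {A B : Set V} {a b : V} (p : G.Walk a b) (ha : a ∈ A)
    (hb : b ∈ B) :
    ∃ u ∈ A, ∃ v ∈ B, ∃ q : G.Walk u v, ∀ x ∈ q.support, x = u ∨ x = v ∨ x ∉ A ∧ x ∉ B := by
  classical
  by_cases h : ∃ x ∈ p.support, x ≠ a ∧ x ≠ b ∧ (x ∈ A ∨ x ∈ B)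
  · obtain ⟨x, hx, hxa, hxb, hxA | hxB⟩ := h
    · exact (p.dropUntil x hx).exists_walk_inner_not_mem hxA hb
    · exact (p.takeUntil x hx).exists_walk_inner_not_mem ha hxB
  · push Not at h
    exact ⟨a, ha, b, hb, p, fun x hx =>
      or_iff_not_imp_left.mpr fun hxa => or_iff_not_imp_left.mpr (h x hx hxa)⟩
termination_by p.length
decreasing_by
  all_goals classical
  first
    | exact length_dropUntil_lt_length hx hxa
    | exact length_takeUntil_lt_length hx hxb

theorem connected_induce_support_union {u v : V} (q : G.Walk u v) {s t : Set V}
    (hs : (G.induce s).Preconnected) (ht : (G.induce t).Preconnected) (hu : u ∈ s) (hv : v ∈ t) :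
    (G.induce ({x | x ∈ q.support} ∪ s ∪ t)).Connected :=
  induce_union_connected
    (induce_union_connected q.connected_induce_support.preconnected hs
      ⟨u, q.start_mem_support, hu⟩).preconnected
    ht ⟨v, Or.inl q.end_mem_support, hv⟩

end SimpleGraph.Walk

section MinorModel

variable {V W W' : Type} {G : SimpleGraph V} {H : SimpleGraph W} {H' : SimpleGraph W'}

structure IsMinorModel (H : SimpleGraph W) (G : SimpleGraph V) (f : V → Option W) : Prop where
  connected : ∀ w : W, (G.induce {v | f v = some w}).Connected
  exists_adj : ∀ ⦃w₁ w₂ : W⦄, H.Adj w₁ w₂ →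
    ∃ v₁ v₂ : V, f v₁ = some w₁ ∧ f v₂ = some w₂ ∧ G.Adj v₁ v₂

theorem isMinor_iff_exists_isMinorModel : IsMinor H G ↔ ∃ f, IsMinorModel H G f :=
  ⟨fun ⟨f, hconn, hadj⟩ => ⟨f, hconn, hadj⟩, fun ⟨f, hf⟩ => ⟨f, hf.connected, hf.exists_adj⟩⟩

namespace IsMinorModel

variable {f : V → Option W}

theorem exists_eq_some (hf : IsMinorModel H G f) (w : W) : ∃ v, f v = some w := by
  obtain ⟨⟨v, hv⟩⟩ := (hf.connected w).nonempty
  exact ⟨v, hv⟩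

theorem map_iso (hf : IsMinorModel H G f) (e : H ≃g H') :
    IsMinorModel H' G (fun v => (f v).map e) where
  connected w := by
    have hset : {v | (f v).map e = some w} = {v | f v = some (e.symm w)} := by
      ext v
      simp only [Set.mem_ofPred_eq, Option.map_eq_some_iff]
      constructor
      · rintro ⟨w₀, hv, rfl⟩
        simpa using hv
      · exact fun hv => ⟨_, hv, by simp⟩
    rw [hset]
    exact hf.connected (e.symm w)
  exists_adj w₁ w₂ h := by
    obtain ⟨v₁, v₂, h₁, h₂, hG⟩ := hf.exists_adj (e.symm.map_adj_iff.mpr h)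
    exact ⟨v₁, v₂, by simp [h₁], by simp [h₂], hG⟩

theorem isMinor_of_coarsening (hf : IsMinorModel H G f) (φ : W → W') (g : V → Option W')
    (hg_conn : ∀ w' : W', (G.induce {v | g v = some w'}).Connected)
    (hg : ∀ v w, f v = some w → g v = some (φ w))
    (hlift : ∀ ⦃w₁ w₂ : W'⦄, H'.Adj w₁ w₂ → ∃ w₁' w₂', φ w₁' = w₁ ∧ φ w₂' = w₂ ∧ H.Adj w₁' w₂') :
    IsMinor H' G := by
  refine isMinor_iff_exists_isMinorModel.mpr ⟨g, hg_conn, fun w₁ w₂ h => ?_⟩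
  obtain ⟨w₁, w₂, rfl, rfl, hH⟩ := hlift h
  obtain ⟨v₁, v₂, h₁, h₂, hG⟩ := hf.exists_adj hH
  exact ⟨v₁, v₂, hg _ _ h₁, hg _ _ h₂, hG⟩

theorem isMinor_of_walk (hf : IsMinorModel H G f) {a b : W} {u v : V} (q : G.Walk u v)
    (hu : f u = some a) (hv : f v = some b)
    (hq : ∀ x ∈ q.support, f x = some a ∨ f x = some b ∨ f x = none)
    (φ : W → W') (hφ_surj : Function.Surjective φ)
    (hφ : ∀ w₁ w₂, φ w₁ = φ w₂ ↔ w₁ = w₂ ∨ (w₁ = a ∨ w₁ = b) ∧ (w₂ = a ∨ w₂ = b))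
    (hlift : ∀ ⦃w₁ w₂ : W'⦄, H'.Adj w₁ w₂ → ∃ w₁' w₂', φ w₁' = w₁ ∧ φ w₂' = w₂ ∧ H.Adj w₁' w₂') :
    IsMinor H' G := by
  classical
  have hfib : ∀ w, φ w = φ a ↔ w = a ∨ w = b := fun w => by rw [hφ]; tauto
  set g : V → Option W' := fun x => if x ∈ q.support then some (φ a) else (f x).map φ
  have hg : ∀ x w, f x = some w → g x = some (φ w) := by
    intro x w hx
    by_cases hxq : x ∈ q.support
    · have hw : w = a ∨ w = b := by rcases hq x hxq with h | h | h <;> simp_all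
      simp [g, hxq, (hfib w).mpr hw]
    · simp [g, hxq, hx]
  refine hf.isMinor_of_coarsening φ g (fun w' => ?_) hg hlift
  by_cases hw' : w' = φ a
  · have hset : {x | g x = some w'} =
        ({x | x ∈ q.support} ∪ {x | f x = some a}) ∪ {x | f x = some b} := by
      ext x
      by_cases hxq : x ∈ q.support
      · simp [g, hxq, hw']
      · simp only [g, hxq, if_false, hw', Set.mem_union, Set.mem_ofPred_eq, false_or,
          Option.map_eq_some_iff, hfib]
        constructor
        · rintro ⟨w, hx, rfl | rfl⟩ <;> simp [hx]
        · rintro (hx | hx) <;> exact ⟨_, hx, by simp⟩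
    rw [hset]
    exact q.connected_induce_support_union (hf.connected a).preconnected
      (hf.connected b).preconnected hu hv
  · obtain ⟨w, rfl⟩ := hφ_surj w'
    have hset : {x | g x = some (φ w)} = {x | f x = some w} := by
      ext x
      have hw : ¬(w = a ∨ w = b) := by rwa [← hfib]
      by_cases hxq : x ∈ q.support
      · simp only [g, hxq, if_true, Set.mem_ofPred_eq, Option.some.injEq]
        constructor
        · intro h; exact absurd h.symm hw'
        · intro hx; rcases hq x hxq with h | h | h <;> simp_all
      · simp only [g, hxq, if_false, Set.mem_ofPred_eq, Option.map_eq_some_iff, hφ]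
        constructor
        · rintro ⟨w₀, hx, rfl | ⟨-, hwab⟩⟩
          exacts [hx, absurd hwab hw]
        · exact fun hx => ⟨w, hx, Or.inl rfl⟩
    rw [hset]
    exact hf.connected w

end IsMinorModel

end MinorModel

def twoK3Relabel (i j : Fin 6) : Fin 6 ≃ Fin 6 := (Equiv.swap 0 i).trans (Equiv.swap 3 j)

theorem exists_twoK3_iso (i j : Fin 6) (hi : i.val < 3) (hj : 3 ≤ j.val) :
    ∃ e : twoK3 ≃g twoK3, e i = 0 ∧ e j = 3 := by
  have key : ∀ i j : Fin 6, i.val < 3 → 3 ≤ j.val →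
      twoK3Relabel i j i = 0 ∧ twoK3Relabel i j j = 3 ∧
      ∀ a b, (twoK3.Adj (twoK3Relabel i j a) (twoK3Relabel i j b) ↔ twoK3.Adj a b) := by
    simp only [twoK3, fromRel_adj]
    decide
  obtain ⟨hi0, hj3, hadj⟩ := key i j hi hj
  exact ⟨⟨twoK3Relabel i j, hadj _ _⟩, hi0, hj3⟩

/-- Glues vertex `0` of the first triangle of `2K₃` to vertex `3` of the second. -/
def twoK3ToButterfly : Fin 6 → Fin 5 := ![2, 0, 1, 2, 3, 4]

theorem SimpleGraph.Connected.isMinor_butterfly_of_isMinor_twoK3 {V : Type} {G : SimpleGraph V}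
    (hc : G.Connected) (h : IsMinor twoK3 G) : IsMinor butterfly G := by
  obtain ⟨f, hf⟩ := isMinor_iff_exists_isMinorModel.mp h
  obtain ⟨a, ha⟩ := hf.exists_eq_some 0
  obtain ⟨b, hb⟩ := hf.exists_eq_some 3
  obtain ⟨u, ⟨i, hi, hu⟩, v, ⟨j, hj, hv⟩, q, hq⟩ :=
    (hc.preconnected a b).some.exists_walk_inner_not_mem
      (A := {x | ∃ i : Fin 6, i.val < 3 ∧ f x = some i})
      (B := {x | ∃ j : Fin 6, 3 ≤ j.val ∧ f x = some j}) ⟨0, by decide, ha⟩ ⟨3, by decide, hb⟩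
  obtain ⟨e, hei, hej⟩ := exists_twoK3_iso i j hi hj
  refine (hf.map_iso e).isMinor_of_walk q (a := 0) (b := 3) (by simp [hu, hei])
    (by simp [hv, hej]) ?_ twoK3ToButterfly (by decide) (by decide) ?_
  · intro x hx
    rcases hq x hx with rfl | rfl | ⟨hxA, hxB⟩
    · simp [hu, hei]
    · simp [hv, hej]
    · right; right
      cases hfx : f x with
      | none => rfl
      | some k =>
        exact ((lt_or_ge k.val 3).elim (hxA ⟨k, ·, hfx⟩) (hxB ⟨k, ·, hfx⟩)).elim
  · simp only [butterfly, twoK3, fromRel_adj]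
    decide

theorem connected_obs_minor_general {V : Type} (G : SimpleGraph V)
    (hc : G.Connected)
    (h : IsMinor twoK3 G ∨ IsMinor K4minus G ∨ IsMinor butterfly G) :
    IsMinor K4minus G ∨ IsMinor butterfly G := by
  rcases h with h | h | h
  · exact Or.inr (hc.isMinor_butterfly_of_isMinor_twoK3 h)
  · exact Or.inl h
  · exact Or.inr h

/-- a connected graph containing some graph of
`obs(S) = {2K₃, K₄⁻, Z}` as a minor contains `K₄⁻` or the butterfly as a minor. -/
theorem connected_obs_minor {V : Type} [Finite V] (G : SimpleGraph V)
    (hc : G.Connected)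
    (h : IsMinor twoK3 G ∨ IsMinor K4minus G ∨ IsMinor butterfly G) :
    IsMinor K4minus G ∨ IsMinor butterfly G :=
  connected_obs_minor_general G hc h
end

section
/- The minor-obstruction set of the class of sub-unicyclic graphs is exactly {2K_3, K_4^-, Z}: a graph contains more than one cycle if and only if it contains one of 2K_3, K_4^-, Z as a minor. -/
open SimpleGraph

/-
Three pairwise disjoint connected vertex sets that are cyclically joined by edges carry a cycle
through any prescribed edge between the first two. Each of `2K₃`, `K₄⁻` and the butterfly `Z`
contains two triangles, one of which has a vertex off the other; a model of it in `G` therefore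
yields two cycles, the first using an edge whose end lies outside every branch set of the second.

Conversely, let `c`, `c'` be cycles and `e` an edge of `c'` not on `c`. If the cycles are
vertex-disjoint, they form a `2K₃` minor. If every vertex of `c'` lies on `c`, then `e` is a chord
of `c`. Otherwise, follow `c'` in both directions from a vertex off `c` until it first meets `c`:
if both directions meet `c` in the same vertex, this is a second cycle sharing exactly one vertex
with `c`, hence a butterfly minor; if not, it is an ear of `c`. A cycle with a chord or an ear is a
theta graph: three internally disjoint paths between two vertices, at most one of them an edge,
and contracting their interiors gives `K₄⁻`.
-/

namespace SimpleGraph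

variable {V : Type*} {G : SimpleGraph V}

lemma connected_induce_singleton (x : V) : (G.induce {x}).Connected :=
  ⟨.of_subsingleton⟩

lemma exists_mem_adj_symm {X Y : Set V} :
    (∃ v ∈ X, ∃ v' ∈ Y, G.Adj v v') → ∃ v ∈ Y, ∃ v' ∈ X, G.Adj v v' :=
  fun ⟨v, hv, v', hv', h⟩ => ⟨v', hv', v, hv, h.symm⟩

lemma Connected.exists_isPath_induce {s : Set V} (hs : (G.induce s).Connected) {a b : V}
    (ha : a ∈ s) (hb : b ∈ s) : ∃ p : G.Walk a b, p.IsPath ∧ ∀ v ∈ p.support, v ∈ s := by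
  classical
  obtain ⟨q⟩ := hs.preconnected ⟨a, ha⟩ ⟨b, hb⟩
  refine ⟨q.toPath.1.map (Embedding.induce s).toHom, q.toPath.2.map Subtype.val_injective,
    fun v hv => ?_⟩
  obtain ⟨⟨v', hv'⟩, _, rfl⟩ := List.mem_map.mp ((Walk.support_map _ _) ▸ hv)
  exact hv'

namespace Walk

variable {u v : V}

lemma mk_mem_edges_of_length_eq_one {p : G.Walk u v} (h : p.length = 1) :
    s(u, v) ∈ p.edges := by
  cases p with
  | nil => simp at h
  | cons _ q => cases q with
    | nil => simp
    | cons _ _ => simp at h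

lemma IsPath.append_cons {w x : V} {p : G.Walk u v} {q : G.Walk w x} (hp : p.IsPath)
    (hq : q.IsPath) (h : G.Adj v w) (hpq : ∀ y ∈ p.support, y ∉ q.support) :
    (p.append (cons h q)).IsPath := by
  refine IsPath.mk' ?_
  rw [support_append, support_cons, List.tail_cons, List.nodup_append]
  exact ⟨hp.support_nodup, hq.support_nodup, fun y hy z hz hyz => hpq y hy (hyz ▸ hz)⟩

lemma IsPath.connected_induce_support_diff_end {p : G.Walk u v} (hp : p.IsPath) (huv : u ≠ v) :
    (G.induce ({w | w ∈ p.support} \ {v})).Connected := by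
  have hsupp : p.support = p.dropLast.support ++ [v] := by
    rw [support_dropLast (not_nil_of_ne huv), dropLast_support_concat]
  have hnd := hp.support_nodup
  rw [hsupp, List.nodup_append] at hnd
  have key : {w | w ∈ p.support} \ {v} = {w | w ∈ p.dropLast.support} := by
    ext w
    rw [hsupp]
    simp only [Set.mem_sdiff, Set.mem_ofPred_eq, Set.mem_singleton_iff, List.mem_append,
      List.mem_singleton]
    grind
  rw [key]
  exact p.dropLast.connected_induce_support

lemma IsPath.snd_ne_end {p : G.Walk u v} (hp : p.IsPath) (h : 2 ≤ p.length) : p.snd ≠ v := by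
  have : ¬ p.tail.Nil := by rw [not_nil_iff_lt_length, length_tail]; omega
  exact hp.tail.nil_iff_eq.not.mp this

lemma IsPath.connected_induce_interior {p : G.Walk u v} (hp : p.IsPath) (h : 2 ≤ p.length) :
    (G.induce ({w | w ∈ p.support} \ {u, v})).Connected := by
  have hsupp : p.support = u :: p.tail.support :=
    (cons_support_tail (by rw [not_nil_iff_lt_length]; omega)).symm
  have hnd := hp.support_nodup
  rw [hsupp, List.nodup_cons] at hnd
  have key : {w | w ∈ p.support} \ {u, v} = {w | w ∈ p.tail.support} \ {v} := by
    ext w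
    rw [hsupp]
    simp only [Set.mem_sdiff, Set.mem_ofPred_eq, Set.mem_singleton_iff, Set.mem_insert_iff,
      List.mem_cons]
    grind
  rw [key]
  exact hp.tail.connected_induce_support_diff_end (hp.snd_ne_end h)

lemma IsPath.snd_mem_interior {p : G.Walk u v} (hp : p.IsPath) (h : 2 ≤ p.length) :
    p.snd ∈ {w | w ∈ p.support} \ {u, v} := by
  have hnil : ¬ p.Nil := by rw [not_nil_iff_lt_length]; omega
  simp only [Set.mem_sdiff, Set.mem_ofPred_eq, Set.mem_insert_iff, Set.mem_singleton_iff, not_or]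
  exact ⟨p.snd_mem_support_of_mem_edges (p.mk_start_snd_mem_edges hnil),
    (p.adj_snd hnil).ne.symm, hp.snd_ne_end h⟩

lemma IsPath.penultimate_mem_interior {p : G.Walk u v} (hp : p.IsPath) (h : 2 ≤ p.length) :
    p.penultimate ∈ {w | w ∈ p.support} \ {u, v} := by
  have := hp.reverse.snd_mem_interior (by rwa [length_reverse])
  simpa only [snd_reverse, support_reverse, List.mem_reverse, Set.pair_comm] using this

lemma IsCycle.exists_triangle {c : G.Walk u u} (hc : c.IsCycle) :
    ∃ A B : Set V, (G.induce A).Connected ∧ (G.induce B).Connected ∧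
      Disjoint ({u} : Set V) A ∧ Disjoint ({u} : Set V) B ∧ Disjoint A B ∧
      A ⊆ {v | v ∈ c.support} ∧ B ⊆ {v | v ∈ c.support} ∧
      (∃ v ∈ ({u} : Set V), ∃ v' ∈ A, G.Adj v v') ∧
      (∃ v ∈ ({u} : Set V), ∃ v' ∈ B, G.Adj v v') ∧ ∃ v ∈ A, ∃ v' ∈ B, G.Adj v v' := by
  have hnil : ¬ c.Nil := hc.not_nil
  have hlen : 2 ≤ c.tail.length := by have := hc.three_le_length; rw [length_tail]; omega
  have htnil : ¬ c.tail.Nil := by rw [not_nil_iff_lt_length]; omega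
  have htail : c.tail.support ⊆ c.support := by
    rw [support_tail_of_not_nil c hnil]; exact List.tail_subset _
  have hP := hc.isPath_tail
  refine ⟨{c.snd}, {w | w ∈ c.tail.support} \ {c.snd, u}, connected_induce_singleton _,
    hP.connected_induce_interior hlen, ?_, ?_, ?_, by simp, fun w hw => htail hw.1,
    ⟨u, rfl, _, rfl, c.adj_snd hnil⟩,
    ⟨u, rfl, _, hP.penultimate_mem_interior hlen, (c.tail.adj_penultimate htnil).symm⟩,
    ⟨_, rfl, _, hP.snd_mem_interior hlen, c.tail.adj_snd htnil⟩⟩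
  · simpa using (c.adj_snd hnil).ne
  · simp
  · simp

lemma IsCycle.support_takeUntil_inter_dropUntil [DecidableEq V] {c : G.Walk u u}
    (hc : c.IsCycle) (hv : v ∈ c.support) {w : V} (hw₁ : w ∈ (c.takeUntil v hv).support)
    (hw₂ : w ∈ (c.dropUntil v hv).support) : w = u ∨ w = v := by
  have hnd := hc.support_nodup
  rw [← c.take_spec hv, tail_support_append, List.nodup_append] at hnd
  rw [← cons_tail_support, List.mem_cons] at hw₁ hw₂
  rcases hw₁ with rfl | hw₁
  · exact Or.inl rfl
  rcases hw₂ with rfl | hw₂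
  · exact Or.inr rfl
  exact absurd rfl (hnd.2.2 _ hw₁ _ hw₂)

lemma exists_eq_append_first_mem {S : Set V} :
    ∀ {u v : V} (p : G.Walk u v), v ∈ S → ∃ y ∈ S, ∃ (q : G.Walk u y) (r : G.Walk y v),
      p = q.append r ∧ ∀ w ∈ q.support, w ∈ S → w = y
  | _, _, nil, hv => ⟨_, hv, nil, nil, rfl, fun _ hw _ => by simpa using hw⟩
  | u, _, cons h p, hv => by
    by_cases hu : u ∈ S
    · exact ⟨u, hu, nil, cons h p, rfl, fun _ hw _ => by simpa using hw⟩
    obtain ⟨y, hy, q, r, rfl, hq⟩ := exists_eq_append_first_mem p hv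
    refine ⟨y, hy, cons h q, r, rfl, fun w hw hwS => ?_⟩
    rw [support_cons, List.mem_cons] at hw
    rcases hw with rfl | hw
    · exact absurd hwS hu
    · exact hq w hw hwS

lemma exists_eq_append_last_mem {S : Set V} (p : G.Walk u v) (hu : u ∈ S) :
    ∃ y ∈ S, ∃ (q : G.Walk u y) (r : G.Walk y v),
      p = q.append r ∧ ∀ w ∈ r.support, w ∈ S → w = y := by
  obtain ⟨y, hy, q, r, hp, hq⟩ := exists_eq_append_first_mem p.reverse hu
  refine ⟨y, hy, r.reverse, q.reverse, ?_, fun w hw => hq w (by simpa using hw)⟩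
  rw [← reverse_append, ← hp, reverse_reverse]

lemma IsCycle.exists_arcs_to_set {S : Set V} {z x : V} {d : G.Walk z z} (hd : d.IsCycle)
    (hz : z ∉ S) (hx : x ∈ d.support) (hxS : x ∈ S) :
    ∃ p ∈ S, ∃ q ∈ S, ∃ (F : G.Walk p z) (E : G.Walk z q), F.IsPath ∧ E.IsPath ∧
      F.support.tail.Disjoint E.support.tail ∧ F.edges.Disjoint E.edges ∧
      (∀ v ∈ F.support, v ∈ S → v = p) ∧ (∀ v ∈ E.support, v ∈ S → v = q) := by
  classical
  have hzx : z ≠ x := fun h => hz (h ▸ hxS)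
  obtain ⟨q, hq, E, R, hER, hE⟩ := exists_eq_append_first_mem (d.takeUntil x hx) hxS
  obtain ⟨p, hp, L, F, hLF, hF⟩ := exists_eq_append_last_mem (d.dropUntil x hx) hxS
  have hd' : ((E.append R).append (L.append F)).IsCycle := by
    rwa [← hER, ← hLF, take_spec]
  have hP₁ : (E.append R).IsPath := hER ▸ hd.isPath_takeUntil hx
  have hP₂ : (L.append F).IsPath := hd'.isPath_of_append_right (hER ▸ not_nil_of_ne hzx)
  have hsupp := List.disjoint_of_nodup_append (by simpa only [tail_support_append] using hd'.2)
  have hedges := List.disjoint_of_nodup_append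
    (by simpa only [edges_append] using hd'.edges_nodup)
  exact ⟨p, hp, q, hq, F, E, hP₂.of_append_right, hP₁.of_append_left,
    fun a hF hE => hsupp (List.mem_append_left _ hE) (List.mem_append_right _ hF),
    fun a hF hE => hedges (List.mem_append_left _ hE) (List.mem_append_right _ hF), hF, hE⟩

lemma IsCycle.exists_ear {S : Set V} {z x : V} {d : G.Walk z z} (hd : d.IsCycle)
    (hz : z ∉ S) (hx : x ∈ d.support) (hxS : x ∈ S) :
    (∃ p ∈ S, ∃ W : G.Walk p p, W.IsCycle ∧ ∀ v ∈ W.support, v ∈ S → v = p) ∨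
      ∃ p ∈ S, ∃ q ∈ S, p ≠ q ∧ ∃ W : G.Walk p q, W.IsPath ∧ 2 ≤ W.length ∧
        ∀ v ∈ W.support, v ∈ S → v = p ∨ v = q := by
  obtain ⟨p, hp, q, hq, F, E, hF, hE, hsupp, hedges, hFS, hES⟩ := hd.exists_arcs_to_set hz hx hxS
  have hF0 : F.length ≠ 0 := fun h => hz (eq_of_length_eq_zero h ▸ hp)
  have hE0 : E.length ≠ 0 := fun h => hz ((eq_of_length_eq_zero h).symm ▸ hq)
  by_cases hpq : p = q
  · subst hpq
    refine Or.inl ⟨p, hp, F.append E, hF.isCycle_append hE hsupp ?_, fun v hv hvS => ?_⟩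
    · by_contra! h
      exact hedges (mk_mem_edges_of_length_eq_one (by omega))
        (Sym2.eq_swap ▸ mk_mem_edges_of_length_eq_one (by omega))
    · rcases (mem_support_append_iff _ _).mp hv with hv | hv
      · exact hFS v hv hvS
      · exact hES v hv hvS
  · refine Or.inr ⟨p, hp, q, hq, hpq, F.append E, IsPath.mk' ?_, ?_, fun v hv hvS => ?_⟩
    · rw [support_append, ← F.cons_tail_support, List.cons_append, List.nodup_cons,
        List.nodup_append, List.mem_append, not_or]
      have hFnd := hF.support_nodup
      rw [← F.cons_tail_support, List.nodup_cons] at hFnd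
      exact ⟨⟨hFnd.1, fun h => hpq (hES p (List.mem_of_mem_tail h) hp)⟩, hFnd.2,
        hE.support_nodup.sublist (List.tail_sublist _), fun a ha b hb hab => hsupp ha (hab ▸ hb)⟩
    · rw [length_append]; omega
    · rcases (mem_support_append_iff _ _).mp hv with hv | hv
      · exact Or.inl (hFS v hv hvS)
      · exact Or.inr (hES v hv hvS)

end Walk

lemma exists_isCycle_of_triangle {A B C : Set V} (hAB : Disjoint A B) (hAC : Disjoint A C)
    (hBC : Disjoint B C) (hA : (G.induce A).Connected) (hB : (G.induce B).Connected)
    (hC : (G.induce C).Connected) {a b : V} (ha : a ∈ A) (hb : b ∈ B) (hab : G.Adj a b)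
    (hBC' : ∃ b' ∈ B, ∃ c ∈ C, G.Adj b' c) (hCA : ∃ c ∈ C, ∃ a' ∈ A, G.Adj c a') :
    ∃ w : G.Walk a a, w.IsCycle ∧ s(a, b) ∈ w.edges ∧ ∀ v ∈ w.support, v ∈ A ∪ B ∪ C := by
  obtain ⟨b', hb', c, hc, hb'c⟩ := hBC'
  obtain ⟨c', hc', a', ha', hc'a'⟩ := hCA
  obtain ⟨pB, hpB, hpBs⟩ := hB.exists_isPath_induce hb hb'
  obtain ⟨pC, hpC, hpCs⟩ := hC.exists_isPath_induce hc hc'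
  obtain ⟨pA, hpA, hpAs⟩ := hA.exists_isPath_induce ha' ha
  have hpCA : (pC.append (Walk.cons hc'a' pA)).IsPath :=
    hpC.append_cons hpA hc'a' fun y hy hy' => hAC.notMem_of_mem_left (hpAs y hy') (hpCs y hy)
  set P := pB.append (Walk.cons hb'c (pC.append (Walk.cons hc'a' pA)))
  have hPs : P.support = pB.support ++ (pC.support ++ pA.support) := by
    simp only [P, Walk.support_append, Walk.support_cons, List.tail_cons]
  have hP : P.IsPath := by
    refine hpB.append_cons hpCA hb'c fun y hy hy' => ?_
    rw [Walk.support_append, Walk.support_cons, List.tail_cons, List.mem_append] at hy'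
    rcases hy' with hy' | hy'
    · exact hBC.notMem_of_mem_left (hpBs y hy) (hpCs y hy')
    · exact hAB.notMem_of_mem_left (hpAs y hy') (hpBs y hy)
  have hPlen : 2 ≤ P.length := by
    simp only [P, Walk.length_append, Walk.length_cons]; omega
  refine ⟨Walk.cons hab P, (Walk.cons_isCycle_iff P hab).mpr ⟨hP, fun he => ?_⟩, by simp, ?_⟩
  · have := hP.length_eq_one_of_mem_edges (Sym2.eq_swap ▸ he)
    omega
  · intro v hv
    rw [Walk.support_cons, hPs] at hv
    simp only [List.mem_cons, List.mem_append] at hv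
    rcases hv with rfl | hv | hv | hv
    · exact Or.inl (Or.inl ha)
    · exact Or.inl (Or.inr (hpBs v hv))
    · exact Or.inr (hpCs v hv)
    · exact Or.inl (Or.inl (hpAs v hv))

end SimpleGraph

section Minors

open SimpleGraph.Walk

variable {V : Type} {G : SimpleGraph V}

lemma isMinor_of_branchSets {W : Type} {H : SimpleGraph W} (B : W → Set V)
    (hdisj : Pairwise (Function.onFun Disjoint B)) (hconn : ∀ w, (G.induce (B w)).Connected)
    (hadj : ∀ w w', H.Adj w w' → ∃ v ∈ B w, ∃ v' ∈ B w', G.Adj v v') : IsMinor H G := by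
  classical
  let f : V → Option W := fun v => if h : ∃ w, v ∈ B w then some h.choose else none
  have hf {v : V} {w : W} : f v = some w ↔ v ∈ B w := by
    by_cases h : ∃ w, v ∈ B w
    · simp only [f, dif_pos h, Option.some_inj]
      refine ⟨fun hw => hw ▸ h.choose_spec, fun hv => ?_⟩
      by_contra hne
      exact (hdisj hne).notMem_of_mem_left h.choose_spec hv
    · simp only [f, dif_neg h, reduceCtorEq, false_iff]
      exact fun hv => h ⟨w, hv⟩
  refine ⟨f, fun w => ?_, fun w w' hww' => ?_⟩
  · rw [show {v | f v = some w} = B w from Set.ext fun _ => hf]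
    exact hconn w
  · obtain ⟨v, hv, v', hv', hvv'⟩ := hadj w w' hww'
    exact ⟨v, v', hf.mpr hv, hf.mpr hv', hvv'⟩

lemma not_subUnicyclic_of_isMinor_of_triangles {W : Type} {H : SimpleGraph W}
    (hm : IsMinor H G) {a₀ a₁ a₂ b₀ b₁ b₂ : W} (ha₀₁ : H.Adj a₀ a₁) (ha₁₂ : H.Adj a₁ a₂)
    (ha₂₀ : H.Adj a₂ a₀) (hb₀₁ : H.Adj b₀ b₁) (hb₁₂ : H.Adj b₁ b₂) (hb₂₀ : H.Adj b₂ b₀)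
    (ha₀ : a₀ ∉ ({b₀, b₁, b₂} : Set W)) : ¬ SubUnicyclic G := by
  obtain ⟨f, hconn, hadj⟩ := hm
  have hdisj {w w' : W} (h : w ≠ w') : Disjoint {v | f v = some w} {v | f v = some w'} :=
    Set.disjoint_left.mpr fun v hv hv' => h (Option.some_injective _ (hv.symm.trans hv'))
  have hedge {w w' : W} (h : H.Adj w w') :
      ∃ v ∈ {v | f v = some w}, ∃ v' ∈ {v | f v = some w'}, G.Adj v v' := by
    obtain ⟨v, v', hv, hv', hvv'⟩ := hadj w w' h
    exact ⟨v, hv, v', hv', hvv'⟩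
  obtain ⟨x, hx, y, hy, hxy⟩ := hedge ha₀₁
  obtain ⟨x', hx', y', hy', hxy'⟩ := hedge hb₀₁
  obtain ⟨c, hc, hxyc, -⟩ := exists_isCycle_of_triangle (hdisj ha₀₁.ne) (hdisj ha₂₀.ne.symm)
    (hdisj ha₁₂.ne) (hconn _) (hconn _) (hconn _) hx hy hxy (hedge ha₁₂) (hedge ha₂₀)
  obtain ⟨c', hc', -, hc'B⟩ := exists_isCycle_of_triangle (hdisj hb₀₁.ne) (hdisj hb₂₀.ne.symm)
    (hdisj hb₁₂.ne) (hconn _) (hconn _) (hconn _) hx' hy' hxy' (hedge hb₁₂) (hedge hb₂₀)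
  intro hG
  have hxc' : x ∈ c'.support := c'.fst_mem_support_of_mem_edges ((hG c c' hc hc' _).mp hxyc)
  simp only [Set.mem_insert_iff, Set.mem_singleton_iff, not_or] at ha₀
  rcases hc'B x hxc' with (h | h) | h
  · exact (hdisj ha₀.1).notMem_of_mem_left hx h
  · exact (hdisj ha₀.2.1).notMem_of_mem_left hx h
  · exact (hdisj ha₀.2.2).notMem_of_mem_left hx h

lemma not_subUnicyclic_of_isMinor
    (h : IsMinor twoK3 G ∨ IsMinor K4minus G ∨ IsMinor butterfly G) : ¬ SubUnicyclic G := by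
  rcases h with h | h | h
  · apply not_subUnicyclic_of_isMinor_of_triangles h (a₀ := 0) (a₁ := 1) (a₂ := 2) (b₀ := 3)
      (b₁ := 4) (b₂ := 5) <;> simp [twoK3]
  · apply not_subUnicyclic_of_isMinor_of_triangles h (a₀ := 0) (a₁ := 2) (a₂ := 3) (b₀ := 1)
      (b₁ := 2) (b₂ := 3) <;> simp [K4minus]
  · apply not_subUnicyclic_of_isMinor_of_triangles h (a₀ := 0) (a₁ := 1) (a₂ := 2) (b₀ := 3)
      (b₁ := 4) (b₂ := 2) <;> simp [butterfly]

lemma isMinor_twoK3_of_disjoint_cycles {u w : V} {c : G.Walk u u} {c' : G.Walk w w}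
    (hc : c.IsCycle) (hc' : c'.IsCycle) (h : c.support.Disjoint c'.support) :
    IsMinor twoK3 G := by
  obtain ⟨A, B, hA, hB, huA, huB, hAB, hAc, hBc, huA', huB', hAB'⟩ := hc.exists_triangle
  obtain ⟨A', B', hA', hB', hwA', hwB', hAB₂, hAc', hBc', hwA'', hwB'', hAB₂'⟩ :=
    hc'.exists_triangle
  have hS : Disjoint {v | v ∈ c.support} {v | v ∈ c'.support} :=
    Set.disjoint_left.mpr fun v hv hv' => h hv hv'
  have hu : {u} ⊆ {v | v ∈ c.support} := by simp
  have hw : {w} ⊆ {v | v ∈ c'.support} := by simp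
  refine isMinor_of_branchSets ![{u}, A, B, {w}, A', B'] ?_ ?_ ?_
  · simp only [pairwise_fin_succ_iff_of_isSymm, Fin.forall_fin_succ, IsEmpty.forall_iff,
      Subsingleton.pairwise, and_true]
    exact ⟨⟨huA, huB, hS.mono hu hw, hS.mono hu hAc', hS.mono hu hBc'⟩,
      ⟨hAB, hS.mono hAc hw, hS.mono hAc hAc', hS.mono hAc hBc'⟩,
      ⟨hS.mono hBc hw, hS.mono hBc hAc', hS.mono hBc hBc'⟩, ⟨hwA', hwB'⟩, hAB₂⟩
  · intro i
    fin_cases i <;> first | assumption | exact connected_induce_singleton _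
  · intro i j hij
    fin_cases i <;> fin_cases j <;>
      first | (simp [twoK3] at hij; done) | assumption | exact exists_mem_adj_symm ‹_›

lemma isMinor_butterfly_of_cycles {p : V} {c c' : G.Walk p p} (hc : c.IsCycle)
    (hc' : c'.IsCycle) (h : ∀ v ∈ c.support, v ∈ c'.support → v = p) :
    IsMinor butterfly G := by
  obtain ⟨A, B, hA, hB, hpA, hpB, hAB, hAc, hBc, hpA', hpB', hAB'⟩ := hc.exists_triangle
  obtain ⟨A', B', hA', hB', hpA₂, hpB₂, hAB₂, hAc', hBc', hpA₂', hpB₂', hAB₂'⟩ :=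
    hc'.exists_triangle
  have hS {X Y : Set V} (hX : X ⊆ {v | v ∈ c.support}) (hY : Y ⊆ {v | v ∈ c'.support})
      (hpX : Disjoint {p} X) : Disjoint X Y :=
    Set.disjoint_left.mpr fun v hvX hvY =>
      Set.disjoint_singleton_left.mp hpX (h v (hX hvX) (hY hvY) ▸ hvX)
  refine isMinor_of_branchSets ![A, B, {p}, A', B'] ?_ ?_ ?_
  · simp only [pairwise_fin_succ_iff_of_isSymm, Fin.forall_fin_succ, IsEmpty.forall_iff,
      Subsingleton.pairwise, and_true]
    exact ⟨⟨hAB, hpA.symm, hS hAc hAc' hpA, hS hAc hBc' hpA⟩,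
      ⟨hpB.symm, hS hBc hAc' hpB, hS hBc hBc' hpB⟩, ⟨hpA₂, hpB₂⟩, hAB₂⟩
  · intro i
    fin_cases i <;> first | assumption | exact connected_induce_singleton _
  · intro i j hij
    fin_cases i <;> fin_cases j <;>
      first | (simp [butterfly] at hij; done) | assumption | exact exists_mem_adj_symm ‹_›

lemma isMinor_K4minus_of_theta {p q : V} {P₁ P₂ P₃ : G.Walk p q} (h₁ : P₁.IsPath)
    (h₂ : P₂.IsPath) (h₃ : P₃.IsPath) (hl₁ : 2 ≤ P₁.length) (hl₂ : 2 ≤ P₂.length)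
    (h₁₂ : ∀ v ∈ P₁.support, v ∈ P₂.support → v = p ∨ v = q)
    (h₁₃ : ∀ v ∈ P₁.support, v ∈ P₃.support → v = p ∨ v = q)
    (h₂₃ : ∀ v ∈ P₂.support, v ∈ P₃.support → v = p ∨ v = q) : IsMinor K4minus G := by
  have hpq : p ≠ q := h₁.nil_iff_eq.not.mp (by rw [not_nil_iff_lt_length]; omega)
  have h₃nil : ¬ P₃.Nil := not_nil_of_ne hpq
  set C := {w | w ∈ P₃.support} \ {q}
  have hpC : p ∈ C := ⟨P₃.start_mem_support, hpq⟩
  have hdisj {P P' : G.Walk p q} (h : ∀ v ∈ P.support, v ∈ P'.support → v = p ∨ v = q) :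
      Disjoint ({w | w ∈ P.support} \ {p, q}) ({w | w ∈ P'.support} \ {q}) :=
    Set.disjoint_left.mpr fun v hv hv' => by
      rcases h v hv.1 hv'.1 with rfl | rfl
      · exact hv.2 (Set.mem_insert _ _)
      · exact hv'.2 rfl
  have hq {P : G.Walk p q} : Disjoint ({w | w ∈ P.support} \ {p, q}) {q} :=
    Set.disjoint_singleton_right.mpr fun h => h.2 (by simp)
  have hadj {P : G.Walk p q} (hP : P.IsPath) (hl : 2 ≤ P.length) :
      (∃ v ∈ {w | w ∈ P.support} \ {p, q}, ∃ v' ∈ C, G.Adj v v') ∧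
        ∃ v ∈ {w | w ∈ P.support} \ {p, q}, ∃ v' ∈ ({q} : Set V), G.Adj v v' := by
    have hnil : ¬ P.Nil := not_nil_of_ne hpq
    exact ⟨⟨_, hP.snd_mem_interior hl, p, hpC, (P.adj_snd hnil).symm⟩,
      ⟨_, hP.penultimate_mem_interior hl, q, rfl, P.adj_penultimate hnil⟩⟩
  obtain ⟨h₁C, h₁q⟩ := hadj h₁ hl₁
  obtain ⟨h₂C, h₂q⟩ := hadj h₂ hl₂
  have hCq : ∃ v ∈ C, ∃ v' ∈ ({q} : Set V), G.Adj v v' :=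
    ⟨_, ⟨P₃.getVert_mem_support _, (P₃.adj_penultimate h₃nil).ne⟩, q, rfl,
      P₃.adj_penultimate h₃nil⟩
  refine isMinor_of_branchSets
    ![{w | w ∈ P₁.support} \ {p, q}, {w | w ∈ P₂.support} \ {p, q}, C, {q}] ?_ ?_ ?_
  · simp only [pairwise_fin_succ_iff_of_isSymm, Fin.forall_fin_succ, IsEmpty.forall_iff,
      Subsingleton.pairwise, and_true]
    exact ⟨⟨(hdisj h₁₂).mono_right (Set.sdiff_subset_sdiff_right (by simp)), hdisj h₁₃, hq⟩,
      ⟨hdisj h₂₃, hq⟩, Set.disjoint_singleton_right.mpr fun h => h.2 rfl⟩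
  · intro i
    fin_cases i
    · exact h₁.connected_induce_interior hl₁
    · exact h₂.connected_induce_interior hl₂
    · exact h₃.connected_induce_support_diff_end hpq
    · exact connected_induce_singleton q
  · intro i j hij
    fin_cases i <;> fin_cases j <;>
      first | (simp [K4minus] at hij; done) | assumption | exact exists_mem_adj_symm ‹_›

lemma isMinor_K4minus_of_cycle_of_path {p q : V} {c : G.Walk p p} (hc : c.IsCycle)
    (hq : q ∈ c.support) (hpq : p ≠ q) {P : G.Walk p q} (hP : P.IsPath)
    (hPc : ∀ v ∈ P.support, v ∈ c.support → v = p ∨ v = q)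
    (hedge : P.length = 1 → s(p, q) ∉ c.edges) : IsMinor K4minus G := by
  classical
  set R₁ := c.takeUntil q hq
  set R₂ := c.dropUntil q hq
  have hR₁ : R₁.IsPath := hc.isPath_takeUntil hq
  have hR₂ : R₂.IsPath := (c.take_spec hq ▸ hc).isPath_of_append_right (not_nil_of_ne hpq)
  have hR : ∀ v ∈ R₁.support, v ∈ R₂.reverse.support → v = p ∨ v = q := fun v h₁ h₂ =>
    hc.support_takeUntil_inter_dropUntil hq h₁ (by simpa using h₂)
  have hR₁P : ∀ v ∈ R₁.support, v ∈ P.support → v = p ∨ v = q :=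
    fun v h₁ h => hPc v h (c.support_takeUntil_subset_support hq h₁)
  have hR₂P : ∀ v ∈ R₂.reverse.support, v ∈ P.support → v = p ∨ v = q :=
    fun v h₂ h => hPc v h (c.support_dropUntil_subset_support hq (by simpa using h₂))
  have hlen : R₁.length + R₂.length = c.length := by rw [← length_append, c.take_spec hq]
  have h3 := hc.three_le_length
  have hR₁0 : R₁.length ≠ 0 := fun h => hpq (eq_of_length_eq_zero h)
  have hR₂0 : R₂.length ≠ 0 := fun h => hpq (eq_of_length_eq_zero h).symm
  have hP0 : P.length ≠ 0 := fun h => hpq (eq_of_length_eq_zero h)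
  by_cases hP1 : P.length = 1
  · have hR₁1 : R₁.length ≠ 1 := fun h =>
      hedge hP1 (c.edges_takeUntil_subset_edges hq (mk_mem_edges_of_length_eq_one h))
    have hR₂1 : R₂.length ≠ 1 := fun h => hedge hP1
      (c.edges_dropUntil_subset_edges hq (Sym2.eq_swap ▸ mk_mem_edges_of_length_eq_one h))
    exact isMinor_K4minus_of_theta hR₁ hR₂.reverse hP (by omega) (by simp; omega) hR hR₁P hR₂P
  · by_cases hR₁2 : 2 ≤ R₁.length
    · exact isMinor_K4minus_of_theta hP hR₁ hR₂.reverse (by omega) hR₁2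
        (fun v h h₁ => hR₁P v h₁ h) (fun v h h₂ => hR₂P v h₂ h) hR
    · exact isMinor_K4minus_of_theta hP hR₂.reverse hR₁ (by omega) (by simp; omega)
        (fun v h h₂ => hR₂P v h₂ h) (fun v h h₁ => hR₁P v h₁ h) (fun v h₂ h₁ => hR v h₁ h₂)

lemma isMinor_of_cycles_of_edge_notMem {u w : V} {c : G.Walk u u} {c' : G.Walk w w}
    (hc : c.IsCycle) (hc' : c'.IsCycle) {e : Sym2 V} (he' : e ∈ c'.edges) (he : e ∉ c.edges) :
    IsMinor twoK3 G ∨ IsMinor K4minus G ∨ IsMinor butterfly G := by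
  classical
  by_cases hdisj : c.support.Disjoint c'.support
  · exact Or.inl (isMinor_twoK3_of_disjoint_cycles hc hc' hdisj)
  obtain ⟨x, hxc, hxc'⟩ : ∃ x ∈ c.support, x ∈ c'.support := by
    simpa [List.Disjoint] using hdisj
  refine Or.inr ?_
  by_cases hsub : ∀ v ∈ c'.support, v ∈ c.support
  · induction e using Sym2.ind with | _ a b => ?_
    have hab : G.Adj a b := c'.adj_of_mem_edges he'
    have ha : a ∈ c.support := hsub a (c'.fst_mem_support_of_mem_edges he')
    have hb : b ∈ c.support := hsub b (c'.snd_mem_support_of_mem_edges he')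
    exact Or.inl (isMinor_K4minus_of_cycle_of_path (hc.rotate ha)
      ((mem_support_rotate_iff ..).mpr hb) hab.ne (IsPath.of_adj hab) (by simp)
      fun _ h => he ((rotate_edges ..).mem_iff.mp h))
  push Not at hsub
  obtain ⟨z, hz, hzc⟩ := hsub
  rcases (hc'.rotate hz).exists_ear (S := {v | v ∈ c.support}) hzc
      ((mem_support_rotate_iff ..).mpr hxc') hxc with
    ⟨p, hp, W, hW, hWc⟩ | ⟨p, hp, q, hq, hpq, W, hW, hWl, hWc⟩
  · exact Or.inr (isMinor_butterfly_of_cycles (hc.rotate hp) hW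
      fun v hv hvW => hWc v hvW ((mem_support_rotate_iff ..).mp hv))
  · exact Or.inl (isMinor_K4minus_of_cycle_of_path (hc.rotate hp)
      ((mem_support_rotate_iff ..).mpr hq) hpq hW
      (fun v hv hvc => hWc v hv ((mem_support_rotate_iff ..).mp hvc)) (by omega))

end Minors

theorem obs_subUnicyclic_general {V : Type} (G : SimpleGraph V) :
    ¬ SubUnicyclic G ↔
      (IsMinor twoK3 G ∨ IsMinor K4minus G ∨ IsMinor butterfly G) := by
  refine ⟨fun h => ?_, not_subUnicyclic_of_isMinor⟩
  simp only [SubUnicyclic, not_forall] at h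
  obtain ⟨u, w, c, c', hc, hc', e, he⟩ := h
  by_cases hec : e ∈ c.edges
  · exact isMinor_of_cycles_of_edge_notMem hc' hc hec fun h => he (iff_of_true hec h)
  · exact isMinor_of_cycles_of_edge_notMem hc hc' (by tauto) hec

/-- `obs(S) = {2K₃, K₄⁻, Z}`: a graph has more than one cycle iff it
contains one of `2K₃`, `K₄⁻`, `Z` as a minor. -/
theorem obs_subUnicyclic {V : Type} [Finite V] (G : SimpleGraph V) :
    ¬ SubUnicyclic G ↔
      (IsMinor twoK3 G ∨ IsMinor K4minus G ∨ IsMinor butterfly G) :=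
  obs_subUnicyclic_general G
end

section
/- For every k ≥ 1 and every G in the class Z_k of k-butterfly-cacti, the set K(G) of central vertices of G is the unique set S of k vertices such that G \ S is a forest. -/
open SimpleGraph

/-!
Removing the centres leaves a forest: in the attachment step the three new non-central vertices
have at most one surviving neighbour each, and a vertex on a cycle has two. Conversely, a set `S`
meeting every cycle of `attachButterfly G' v` restricts to such a set of `G'` and meets the new
triangle avoiding `v`, so `|S| ≥ |K'| + 1`; in case of equality the old part is exactly `K'`, so
`v` survives and the single new vertex must also meet the triangle through `v`, i.e. it is the
centre. A lone butterfly is a butterfly attached to a one-vertex graph, which settles the base case.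
-/

lemma Set.ncard_eq_ncard_preimage_inl_add_ncard_preimage_inr {α β : Type*} [Finite α] [Finite β]
    (s : Set (α ⊕ β)) : s.ncard = (Sum.inl ⁻¹' s).ncard + (Sum.inr ⁻¹' s).ncard := by
  conv_lhs => rw [← Set.image_preimage_inl_union_image_preimage_inr s]
  rw [Set.ncard_union_eq Set.disjoint_image_inl_image_inr,
    Set.ncard_image_of_injective _ Sum.inl_injective,
    Set.ncard_image_of_injective _ Sum.inr_injective]

lemma Set.ncard_inl_image_union_singleton_inr {α β : Type*} [Finite α] (s : Set α) (b : β) :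
    (Sum.inl '' s ∪ {Sum.inr b}).ncard = s.ncard + 1 := by
  rw [Set.ncard_union_eq (by simp), Set.ncard_image_of_injective _ Sum.inl_injective,
    Set.ncard_singleton]

namespace SimpleGraph

section

variable {V W : Type*} {G : SimpleGraph V} {H : SimpleGraph W}

def Embedding.restrict (φ : G ↪g H) {s : Set V} {t : Set W} (h : Set.MapsTo φ s t) :
    G.induce s ↪g H.induce t where
  toFun := h.restrict
  inj' := (Set.MapsTo.restrict_inj h).mpr φ.injective.injOn
  map_rel_iff' := φ.map_adj_iff

lemma Walk.IsCycle.neighborSet_nontrivial {u x : V} {c : G.Walk u u} (hc : c.IsCycle)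
    (hx : x ∈ c.support) : (G.neighborSet x).Nontrivial := by
  classical
  have hc' := hc.rotate hx
  exact ⟨_, Walk.adj_snd hc'.not_nil, _, (Walk.adj_penultimate hc'.not_nil).symm,
    hc'.snd_ne_penultimate⟩

lemma IsAcyclic.of_embedding_of_subsingleton_neighborSet (φ : H ↪g G) (hH : H.IsAcyclic)
    (h : ∀ x ∉ Set.range φ, (G.neighborSet x).Subsingleton) : G.IsAcyclic := by
  intro u c hc
  have hsupp : ∀ x ∈ c.support, x ∈ Set.range φ := fun x hx => by
    by_contra hxφ
    exact (hc.neighborSet_nontrivial hx).not_subsingleton (h x hxφ)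
  refine φ.isoInduceRange.isAcyclic_iff.mp hH (c.induce _ hsupp) ?_
  exact (Walk.isCycle_map_iff_of_injective (Embedding.induce (G := G) _).injective).mp
    (by rwa [Walk.map_induce])

def IsFeedbackVertexSet (G : SimpleGraph V) (S : Set V) : Prop :=
  (G.induce Sᶜ).IsAcyclic

def IsUniqueMinFeedbackVertexSet (G : SimpleGraph V) (K : Set V) : Prop :=
  G.IsFeedbackVertexSet K ∧ ∀ S, G.IsFeedbackVertexSet S → S ≠ K → K.ncard < S.ncard

namespace IsFeedbackVertexSet

lemma comap (φ : G ↪g H) {T : Set W} (hT : H.IsFeedbackVertexSet T) :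
    G.IsFeedbackVertexSet (φ ⁻¹' T) :=
  hT.embedding (φ.restrict fun _ hx => hx)

lemma mem_triangle {S : Set V} (hS : G.IsFeedbackVertexSet S) {a b c : V}
    (hab : G.Adj a b) (hac : G.Adj a c) (hbc : G.Adj b c) : a ∈ S ∨ b ∈ S ∨ c ∈ S := by
  classical
  by_contra! ⟨ha, hb, hc⟩
  exact hS.cliqueFree le_rfl _ <| is3Clique_triple_iff (G := G.induce Sᶜ)
    (a := ⟨a, ha⟩) (b := ⟨b, hb⟩) (c := ⟨c, hc⟩) |>.mpr ⟨hab, hac, hbc⟩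

end IsFeedbackVertexSet

lemma IsUniqueMinFeedbackVertexSet.of_iso (e : G ≃g H) {T : Set W}
    (hT : H.IsUniqueMinFeedbackVertexSet T) : G.IsUniqueMinFeedbackVertexSet (e.symm '' T) := by
  have himage : e.symm '' T = e ⁻¹' T :=
    congrFun (Set.image_eq_preimage_of_inverse e.apply_symm_apply e.symm_apply_apply) T
  refine ⟨himage ▸ hT.1.comap e.toEmbedding, fun S hS hne => ?_⟩
  have hne' : e.symm ⁻¹' S ≠ T := by
    rintro rfl
    exact hne (Set.image_preimage_eq S e.symm.surjective).symm
  calc (e.symm '' T).ncard = T.ncard := Set.ncard_image_of_injective T e.symm.injective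
    _ < (e.symm ⁻¹' S).ncard := hT.2 _ (hS.comap e.symm.toEmbedding) hne'
    _ = S.ncard := Set.ncard_preimage_of_injective_subset_range e.symm.injective (by simp)

end

section attachButterfly

variable {V : Type} {G : SimpleGraph V} {v : V}

lemma attachButterfly_adj_inl_inl {x y : V} :
    (attachButterfly G v).Adj (Sum.inl x) (Sum.inl y) ↔ G.Adj x y := by
  simp only [attachButterfly, fromRel_adj]
  aesop (add simp adj_comm)

lemma attachButterfly_eq_of_adj_inr {i : Fin 4} (hi : i ≠ 1) {b b' : V ⊕ Fin 4}
    (hb : (attachButterfly G v).Adj (Sum.inr i) b) (hb' : (attachButterfly G v).Adj (Sum.inr i) b')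
    (h1 : b ≠ Sum.inr 1) (h1' : b' ≠ Sum.inr 1) : b = b' := by
  simp only [attachButterfly, fromRel_adj] at hb hb'
  fin_cases i <;> simp_all

variable (G v) in
def attachButterflyEmbedding : G ↪g attachButterfly G v :=
  ⟨Function.Embedding.inl, attachButterfly_adj_inl_inl⟩

lemma isFeedbackVertexSet_attachButterfly {K : Set V} (hK : G.IsFeedbackVertexSet K) :
    (attachButterfly G v).IsFeedbackVertexSet (Sum.inl '' K ∪ {Sum.inr 1}) := by
  refine IsAcyclic.of_embedding_of_subsingleton_neighborSet
    ((attachButterflyEmbedding G v).restrict (t := (Sum.inl '' K ∪ {Sum.inr 1})ᶜ)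
      fun x hx => show Sum.inl x ∉ _ by simpa using hx) hK ?_
  rintro ⟨x | i, hx⟩ hrange
  · exact absurd ⟨⟨x, by simpa using hx⟩, rfl⟩ hrange
  · have hi : i ≠ 1 := by rintro rfl; simp at hx
    rintro ⟨b, hb⟩ hib ⟨b', hb'⟩ hib'
    refine Subtype.ext (attachButterfly_eq_of_adj_inr hi hib hib' ?_ ?_)
    · rintro rfl; simp at hb
    · rintro rfl; simp at hb'

lemma IsFeedbackVertexSet.hits_attachButterfly {S : Set (V ⊕ Fin 4)}
    (hS : (attachButterfly G v).IsFeedbackVertexSet S) :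
    (Sum.inl v ∈ S ∨ Sum.inr 0 ∈ S ∨ Sum.inr 1 ∈ S) ∧
      (Sum.inr 1 ∈ S ∨ Sum.inr 2 ∈ S ∨ Sum.inr 3 ∈ S) := by
  refine ⟨hS.mem_triangle ?_ ?_ ?_, hS.mem_triangle ?_ ?_ ?_⟩ <;> simp [attachButterfly]

lemma two_le_ncard_of_hits_butterfly {T : Set (Fin 4)} (h01 : 0 ∈ T ∨ 1 ∈ T)
    (h123 : 1 ∈ T ∨ 2 ∈ T ∨ 3 ∈ T) (hT : T ≠ {1}) : 2 ≤ T.ncard := by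
  rw [Nat.succ_le_iff, Set.one_lt_ncard_iff (Set.toFinite T)]
  by_cases h1 : 1 ∈ T
  · obtain ⟨x, hx, hx1⟩ : ∃ x ∈ T, x ≠ 1 := by
      by_contra! h
      exact hT (Set.eq_singleton_iff_unique_mem.mpr ⟨h1, h⟩)
    exact ⟨x, 1, hx, h1, hx1⟩
  · simp only [h1, or_false, false_or] at h01 h123
    rcases h123 with h | h <;> exact ⟨0, _, h01, h, by decide⟩

lemma isUniqueMinFeedbackVertexSet_attachButterfly [Finite V] {K : Set V}
    (hK : G.IsUniqueMinFeedbackVertexSet K) (hv : v ∉ K) :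
    (attachButterfly G v).IsUniqueMinFeedbackVertexSet (Sum.inl '' K ∪ {Sum.inr 1}) := by
  refine ⟨isFeedbackVertexSet_attachButterfly hK.1, fun S hS hne => ?_⟩
  rw [Set.ncard_inl_image_union_singleton_inr,
    Set.ncard_eq_ncard_preimage_inl_add_ncard_preimage_inr S]
  have hS₁ : G.IsFeedbackVertexSet (Sum.inl ⁻¹' S) := hS.comap (attachButterflyEmbedding G v)
  obtain ⟨hv01, h123⟩ := hS.hits_attachButterfly
  by_cases hS₁K : Sum.inl ⁻¹' S = K
  · have hS₂ : Sum.inr ⁻¹' S ≠ {1} := fun hS₂ => hne <| by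
      rw [← Set.image_preimage_inl_union_image_preimage_inr S, hS₁K, hS₂, Set.image_singleton]
    have hvS : Sum.inl v ∉ S := fun h => hv (hS₁K ▸ h)
    have := two_le_ncard_of_hits_butterfly (by simpa [hvS] using hv01) h123 hS₂
    rw [hS₁K]
    omega
  · have := hK.2 _ hS₁ hS₁K
    have : 0 < (Sum.inr ⁻¹' S).ncard := by
      rw [Set.ncard_pos (Set.toFinite _)]
      rcases h123 with h | h | h <;> exact ⟨_, h⟩
    omega

end attachButterfly

def butterflyIsoAttachButterfly : butterfly ≃g attachButterfly (⊥ : SimpleGraph Unit) () where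
  toFun := ![Sum.inl (), Sum.inr 0, Sum.inr 1, Sum.inr 2, Sum.inr 3]
  invFun := Sum.elim (fun _ => 0) Fin.succ
  left_inv a := by fin_cases a <;> rfl
  right_inv
    | .inl () => rfl
    | .inr i => by fin_cases i <;> rfl
  map_rel_iff' {a b} := by
    fin_cases a <;> fin_cases b <;> simp [attachButterfly, butterfly]

lemma isUniqueMinFeedbackVertexSet_bot_empty {V : Type*} [Subsingleton V] :
    (⊥ : SimpleGraph V).IsUniqueMinFeedbackVertexSet ∅ :=
  ⟨IsAcyclic.of_subsingleton, fun S _ hS => by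
    simpa [Set.ncard_pos (Set.toFinite S), Set.nonempty_iff_ne_empty] using hS⟩

lemma finite_of_iso_attachButterfly {V V' : Type} {G : SimpleGraph V} {G' : SimpleGraph V'}
    {v : V'} [Finite V] (e : G ≃g attachButterfly G' v) : Finite V' :=
  .of_injective (e.symm ∘ Sum.inl) (e.symm.injective.comp Sum.inl_injective)

end SimpleGraph

open SimpleGraph

lemma IsBCactus.ncard_eq {k : ℕ} {V : Type} {G : SimpleGraph V} {K : Set V} [Finite V]
    (h : IsBCactus k G K) : K.ncard = k := by
  revert ‹Finite V›
  induction h with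
  | base => exact Set.ncard_singleton _
  | @step V V' k G G' S' v hv h' e ih =>
    intro
    have := finite_of_iso_attachButterfly e
    rw [Set.ncard_image_of_injective _ e.symm.injective,
      Set.ncard_inl_image_union_singleton_inr, ih]

lemma IsBCactus.isUniqueMinFeedbackVertexSet {k : ℕ} {V : Type} {G : SimpleGraph V} {K : Set V}
    [Finite V] (h : IsBCactus k G K) : G.IsUniqueMinFeedbackVertexSet K := by
  revert ‹Finite V›
  induction h with
  | base G e =>
    intro
    have := (isUniqueMinFeedbackVertexSet_attachButterfly isUniqueMinFeedbackVertexSet_bot_empty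
      (Set.notMem_empty ())).of_iso (e.trans butterflyIsoAttachButterfly)
    simp only [Set.image_empty, Set.empty_union, Set.image_singleton] at this
    exact this
  | @step V V' k G G' S' v hv h' e ih =>
    intro
    have := finite_of_iso_attachButterfly e
    exact (isUniqueMinFeedbackVertexSet_attachButterfly ih hv).of_iso e

theorem bcactus_unique_forest_set_general {V : Type} [Finite V] (k : ℕ)
    (G : SimpleGraph V) (K : Set V) (h : IsBCactus k G K) :
    ∀ S : Set V, (S.ncard = k ∧ (G.induce Sᶜ).IsAcyclic) ↔ S = K := by
  have hmin := h.isUniqueMinFeedbackVertexSet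
  intro S
  constructor
  · rintro ⟨hS, hacyc⟩
    by_contra hne
    exact (hmin.2 S hacyc hne).ne (h.ncard_eq.trans hS.symm)
  · rintro rfl
    exact ⟨h.ncard_eq, hmin.1⟩

/-- for `G ∈ Z_k`, the set `K(G)` of central vertices is the unique
set of `k` vertices whose deletion leaves a forest. -/
theorem bcactus_unique_forest_set {V : Type} [Finite V] (k : ℕ) (hk : 1 ≤ k)
    (G : SimpleGraph V) (K : Set V) (h : IsBCactus k G K) :
    ∀ S : Set V, (S.ncard = k ∧ (G.induce Sᶜ).IsAcyclic) ↔ S = K :=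
  bcactus_unique_forest_set_general k G K h
end

section
/- For every nonnegative integer k, the disjoint union of k+2 triangles, (k+2)K_3, is a minor-obstruction for the class of k-apex sub-unicyclic graphs. -/
open SimpleGraph

/-!
A minor of `(k+2)K₃` is a subgraph of it, because every branch set lies inside one triangle, and
each cycle of a subgraph of `(k+2)K₃` is a whole triangle. Deleting `k` vertices of `(k+2)K₃` leaves
two intact triangles, hence two cycles. Conversely, a proper minor misses an edge of some triangle
`i₀`; deleting one vertex from each triangle other than `i₀` and one further triangle `j₀` leaves
triangle `j₀` as the only possible cycle.
-/
lemma SimpleGraph.Walk.isCycle_triangle {V : Type} {G : SimpleGraph V} {a b c : V}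
    (hab : G.Adj a b) (hbc : G.Adj b c) (hca : G.Adj c a) :
    (cons hab (cons hbc (cons hca nil))).IsCycle := by
  simp [Walk.cons_isCycle_iff, Walk.isPath_def, hab.ne, hbc.ne, hca.ne, hab.ne.symm,
    hca.ne.symm]

lemma IsMinor.exists_injective_hom {W V : Type} {H : SimpleGraph W} {G : SimpleGraph V}
    (hG : ∀ a b, G.Reachable a b → a ≠ b → G.Adj a b) (hm : IsMinor H G) :
    ∃ φ : H →g G, Function.Injective φ := by
  obtain ⟨f, hconn, hadj⟩ := hm
  have hbranch : ∀ w, ∃ v, f v = some w := fun w => by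
    obtain ⟨⟨v, hv⟩⟩ := (hconn w).nonempty
    exact ⟨v, hv⟩
  choose rep hrep using hbranch
  have hreach : ∀ w v, f v = some w → G.Reachable (rep w) v := fun w v hv =>
    ((hconn w).preconnected ⟨rep w, hrep w⟩ ⟨v, hv⟩).map (Embedding.induce _).toHom
  have hinj : Function.Injective rep := fun w w' h =>
    Option.some_injective _ ((hrep w).symm.trans (h ▸ hrep w'))
  refine ⟨⟨rep, fun {w w'} h => ?_⟩, hinj⟩
  obtain ⟨v, v', hv, hv', hvv'⟩ := hadj w w' h
  exact hG _ _ ((hreach w v hv).trans (hvv'.reachable.trans (hreach w' v' hv').symm))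
    (hinj.ne h.ne)

namespace kTriangles

open Function

variable {n : ℕ}

lemma adj_iff {a b : Fin n × Fin 3} : (kTriangles n).Adj a b ↔ a ≠ b ∧ a.1 = b.1 := by
  simp only [kTriangles, fromRel_adj, ne_eq]
  exact and_congr_right fun _ => or_iff_left_of_imp Eq.symm

lemma fst_eq_of_reachable {a b : Fin n × Fin 3} (h : (kTriangles n).Reachable a b) :
    a.1 = b.1 := by
  obtain ⟨p⟩ := h
  induction p with
  | nil => rfl
  | cons hadj _ ih => exact (adj_iff.mp hadj).2.trans ih

lemma adj_of_reachable {a b : Fin n × Fin 3} (h : (kTriangles n).Reachable a b) (hne : a ≠ b) :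
    (kTriangles n).Adj a b :=
  adj_iff.mpr ⟨hne, fst_eq_of_reachable h⟩

def triangleEdges (i : Fin n) : Finset (Sym2 (Fin n × Fin 3)) :=
  {s((i, 0), (i, 1)), s((i, 1), (i, 2)), s((i, 2), (i, 0))}

lemma mem_triangleEdges_of_adj {a b : Fin n × Fin 3} (h : (kTriangles n).Adj a b) :
    s(a, b) ∈ triangleEdges a.1 := by
  obtain ⟨hne, hfst⟩ := adj_iff.mp h
  obtain ⟨i, s⟩ := a
  obtain ⟨j, t⟩ := b
  obtain rfl : i = j := hfst
  fin_cases s <;> fin_cases t <;> simp_all [triangleEdges, Sym2.eq_swap]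

lemma disjoint_triangleEdges {i j : Fin n} (hij : i ≠ j) :
    Disjoint (triangleEdges i) (triangleEdges j) := by
  simp [triangleEdges, Ne.symm hij]

lemma edges_toFinset_of_isCycle {u : Fin n × Fin 3} {c : (kTriangles n).Walk u u}
    (hc : c.IsCycle) : c.edges.toFinset = triangleEdges u.1 := by
  have hsub : c.edges.toFinset ⊆ triangleEdges u.1 := by
    intro e he
    rw [List.mem_toFinset] at he
    induction e using Sym2.ind with
    | _ a b =>
      have ha : u.1 = a.1 :=
        fst_eq_of_reachable (c.takeUntil a (c.fst_mem_support_of_mem_edges he)).reachable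
      exact ha ▸ mem_triangleEdges_of_adj (c.adj_of_mem_edges he)
  refine Finset.eq_of_subset_of_card_le hsub ?_
  calc (triangleEdges u.1).card ≤ 3 := Finset.card_le_three
    _ ≤ c.length := hc.three_le_length
    _ = c.edges.toFinset.card := by
      rw [List.toFinset_card_of_nodup hc.edges_nodup, Walk.length_edges]

variable {V : Type} {G : SimpleGraph V}

def CoversTriangle (φ : G →g kTriangles n) (i : Fin n) : Prop :=
  ∀ ⦃a b⦄, (kTriangles n).Adj a b → a.1 = i → ∃ x y, G.Adj x y ∧ φ x = a ∧ φ y = b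

lemma mem_edges_iff_of_isCycle {φ : G →g kTriangles n} (hφ : Injective φ) {u : V}
    {c : G.Walk u u} (hc : c.IsCycle) (e : Sym2 V) :
    e ∈ c.edges ↔ e.map φ ∈ triangleEdges (φ u).1 := by
  rw [← edges_toFinset_of_isCycle (hc.map hφ), List.mem_toFinset, Walk.edges_map,
    List.mem_map_of_injective (Sym2.map.injective hφ)]

lemma coversTriangle_of_isCycle {φ : G →g kTriangles n} (hφ : Injective φ) {u : V}
    {c : G.Walk u u} (hc : c.IsCycle) : CoversTriangle φ (φ u).1 := by
  intro a b hab ha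
  have hmem : s(a, b) ∈ triangleEdges (φ u).1 := ha ▸ mem_triangleEdges_of_adj hab
  rw [← edges_toFinset_of_isCycle (hc.map hφ), List.mem_toFinset, Walk.edges_map,
    List.mem_map] at hmem
  obtain ⟨e, he, hea⟩ := hmem
  induction e using Sym2.ind with
  | _ x y =>
    have hxy := c.adj_of_mem_edges he
    rcases Sym2.eq_iff.mp hea with ⟨rfl, rfl⟩ | ⟨rfl, rfl⟩
    · exact ⟨x, y, hxy, rfl, rfl⟩
    · exact ⟨y, x, hxy.symm, rfl, rfl⟩

lemma CoversTriangle.of_comp {W : Type} {H : SimpleGraph W} {φ : G →g kTriangles n}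
    {f : H →g G} {i : Fin n} (h : CoversTriangle (φ.comp f) i) : CoversTriangle φ i := by
  intro a b hab ha
  obtain ⟨x, y, hxy, rfl, rfl⟩ := h hab ha
  exact ⟨f x, f y, f.map_adj hxy, rfl, rfl⟩

lemma subUnicyclic_of_isCycle_fst_eq {φ : G →g kTriangles n} (hφ : Injective φ) (j : Fin n)
    (h : ∀ u (c : G.Walk u u), c.IsCycle → (φ u).1 = j) : SubUnicyclic G := by
  intro u w c c' hc hc' e
  rw [mem_edges_iff_of_isCycle hφ hc, mem_edges_iff_of_isCycle hφ hc', h u c hc, h w c' hc']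

lemma isMinor_of_forall_coversTriangle {φ : G →g kTriangles n} (hφ : Injective φ)
    (h : ∀ i, CoversTriangle φ i) : IsMinor (kTriangles n) G := by
  refine ⟨fun v => some (φ v), fun a => ?_, fun a b hab => ?_⟩
  · obtain ⟨t, ht⟩ := exists_ne a.2
    obtain ⟨x, -, -, hx, -⟩ :=
      h a.1 (b := (a.1, t)) (adj_iff.mpr ⟨fun hat => ht (congrArg Prod.snd hat).symm, rfl⟩) rfl
    have : Subsingleton {v | some (φ v) = some a} :=
      ⟨fun v w => Subtype.ext (hφ (Option.some_injective _ (v.2.trans w.2.symm)))⟩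
    have : Nonempty {v | some (φ v) = some a} := ⟨⟨x, congrArg some hx⟩⟩
    exact ⟨Preconnected.of_subsingleton⟩
  · obtain ⟨x, y, hxy, rfl, rfl⟩ := h a.1 hab rfl
    exact ⟨x, y, rfl, rfl, hxy⟩

theorem not_kApexSub (k : ℕ) : ¬ KApexSub k (kTriangles (k + 2)) := by
  rintro ⟨S, hS, hsub⟩
  obtain ⟨i, hi, j, hj, hij⟩ :=
      (Set.one_lt_ncard (s := (Prod.fst '' S)ᶜ) (Set.toFinite _)).mp <| by
    have hsum := Set.ncard_add_ncard_compl (Prod.fst '' S)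
    have himage := (Set.ncard_image_le (f := Prod.fst) (Set.toFinite S)).trans hS
    rw [Nat.card_eq_fintype_card, Fintype.card_fin] at hsum
    omega
  have hcycle : ∀ i ∉ Prod.fst '' S, ∃ (u : ↥Sᶜ) (c : ((kTriangles (k + 2)).induce Sᶜ).Walk u u),
      c.IsCycle ∧ u.1.1 = i := by
    intro i hi
    have hv : ∀ t, (i, t) ∈ Sᶜ := fun t ht => hi ⟨_, ht, rfl⟩
    have hadj : ∀ s t, s ≠ t → ((kTriangles _).induce Sᶜ).Adj ⟨(i, s), hv s⟩ ⟨(i, t), hv t⟩ :=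
      fun s t hst => adj_iff.mpr ⟨by simpa using hst, rfl⟩
    exact ⟨_, _, Walk.isCycle_triangle (hadj 0 1 (by decide)) (hadj 1 2 (by decide))
      (hadj 2 0 (by decide)), rfl⟩
  obtain ⟨u, c, hc, rfl⟩ := hcycle i hi
  obtain ⟨w, c', hc', rfl⟩ := hcycle j hj
  have hinj : Injective (Embedding.induce Sᶜ : _ ↪g kTriangles (k + 2)).toHom :=
    Subtype.val_injective
  obtain ⟨e, he⟩ := List.exists_mem_of_ne_nil _ (Walk.edges_eq_nil.not.mpr hc.not_nil)
  exact Finset.disjoint_left.mp (disjoint_triangleEdges hij)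
    ((mem_edges_iff_of_isCycle hinj hc e).mp he)
    ((mem_edges_iff_of_isCycle hinj hc' e).mp ((hsub c c' hc hc' e).mp he))

theorem kApexSub_of_isMinor {k : ℕ} {W : Type} {H : SimpleGraph W}
    (hm : IsMinor H (kTriangles (k + 2))) (hn : ¬ IsMinor (kTriangles (k + 2)) H) :
    KApexSub k H := by
  obtain ⟨φ, hφ⟩ := hm.exists_injective_hom fun _ _ => adj_of_reachable
  obtain ⟨i₀, hi₀⟩ : ∃ i₀, ¬ CoversTriangle φ i₀ := by
    by_contra! h
    exact hn (isMinor_of_forall_coversTriangle hφ h)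
  obtain ⟨j₀, hj₀⟩ := exists_ne i₀
  let T : Set (Fin (k + 2) × Fin 3) := (·, 0) '' {i₀, j₀}ᶜ
  refine ⟨φ ⁻¹' T, ?_, ?_⟩
  · calc (φ ⁻¹' T).ncard ≤ T.ncard := Set.ncard_le_ncard_of_injOn φ (fun _ h => h) hφ.injOn
      _ ≤ ({i₀, j₀}ᶜ : Set (Fin (k + 2))).ncard := Set.ncard_image_le
      _ = k := by
        rw [Set.ncard_compl, Set.ncard_pair hj₀.symm, Nat.card_eq_fintype_card, Fintype.card_fin]
        rfl
  · let ψ := φ.comp (Embedding.induce (φ ⁻¹' T)ᶜ).toHom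
    have hψ : Injective ψ := hφ.comp Subtype.val_injective
    refine subUnicyclic_of_isCycle_fst_eq hψ j₀ fun u c hc => ?_
    have hcov := coversTriangle_of_isCycle hψ hc
    by_contra hj
    have hi : (ψ u).1 ≠ i₀ := fun h => hi₀ (h ▸ hcov.of_comp)
    obtain ⟨x, -, -, hx, -⟩ :=
      hcov (a := ((ψ u).1, 0)) (b := ((ψ u).1, 1)) (adj_iff.mpr ⟨by simp, rfl⟩) rfl
    exact x.2 ⟨(ψ u).1, by simp [hi, hj], hx.symm⟩

end kTriangles

/-- `(k+2)K₃` is a minor-obstruction for `k`-apex sub-unicyclic graphs. -/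
theorem kTriangles_is_obstruction (k : ℕ) : ObstructionSub k (kTriangles (k + 2)) :=
  ⟨kTriangles.not_kApexSub k, fun _ _ => kTriangles.kApexSub_of_isMinor⟩
end

section
/- If G is a nearly-biconnected minor-obstruction for the class of 1-apex sub-unicyclic graphs, then G is also a minor-obstruction for the class of 1-apex pseudoforests. -/
open SimpleGraph

/-!
Every sub-unicyclic graph is a pseudoforest, so the minimality condition transfers directly. For
the other half it suffices that deleting at most one vertex `v` from a nearly-biconnected graph
leaves all cycles in one connected component, since a pseudoforest whose cycles share a component
is sub-unicyclic. If `v` is not the cut-vertex, `G - v` is connected. If `v` is the cut-vertex `x`,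
the two remaining triangle vertices lie on no cycle of `G - x`, and the rest of `G - x` is the
connected graph `G[A] - x`.
-/

section

variable {V W : Type} {G : SimpleGraph V}

lemma SubUnicyclic.of_embedding {H : SimpleGraph W} (f : H ↪g G) (hG : SubUnicyclic G) :
    SubUnicyclic H := by
  intro u w c c' hc hc' e
  have hinj : Function.Injective (Sym2.map f.toHom) := Sym2.map.injective f.injective
  have key := hG (c.map f.toHom) (c'.map f.toHom) (hc.map f.injective) (hc'.map f.injective)
    (Sym2.map f.toHom e)
  rwa [Walk.edges_map, Walk.edges_map, List.mem_map_of_injective hinj,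
    List.mem_map_of_injective hinj] at key

lemma SubUnicyclic.pseudoforest (h : SubUnicyclic G) : Pseudoforest G :=
  fun C => h.of_embedding (Embedding.induce C.supp)

lemma SimpleGraph.Walk.mem_supp_connectedComponentMk {u v z : V} (p : G.Walk u v)
    (hz : z ∈ p.support) : z ∈ (G.connectedComponentMk u).supp := by
  classical
  exact ConnectedComponent.sound (p.takeUntil z hz).reachable.symm

/-- Both cycles lift to the common connected component, which is sub-unicyclic. -/
lemma Pseudoforest.mem_edges_iff_of_reachable (hpf : Pseudoforest G) {u w : V}
    {c : G.Walk u u} {c' : G.Walk w w} (hc : c.IsCycle) (hc' : c'.IsCycle)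
    (huw : G.Reachable u w) (e : Sym2 V) : e ∈ c.edges ↔ e ∈ c'.edges := by
  set C := G.connectedComponentMk u
  have hsupp : ∀ z ∈ c.support, z ∈ C.supp := fun z hz => c.mem_supp_connectedComponentMk hz
  have hsupp' : ∀ z ∈ c'.support, z ∈ C.supp := fun z hz =>
    (c'.mem_supp_connectedComponentMk hz).trans (ConnectedComponent.sound huw).symm
  have hlift := Walk.map_induce c hsupp
  have hlift' := Walk.map_induce c' hsupp'
  have key := hpf C _ _ (hlift ▸ hc).of_map (hlift' ▸ hc').of_map
  let ι : G.induce C.supp →g G := (Embedding.induce C.supp).toHom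
  have hedges : (c.induce C.supp hsupp).edges.map (Sym2.map ι) = c.edges :=
    (Walk.edges_map _ _).symm.trans (congrArg Walk.edges hlift)
  have hedges' : (c'.induce C.supp hsupp').edges.map (Sym2.map ι) = c'.edges :=
    (Walk.edges_map _ _).symm.trans (congrArg Walk.edges hlift')
  rw [← hedges, ← hedges', List.mem_map, List.mem_map]
  simp only [key]

lemma Pseudoforest.subUnicyclic_of_reachable (hpf : Pseudoforest G)
    (hreach : ∀ ⦃u w : V⦄ (c : G.Walk u u) (c' : G.Walk w w),
      c.IsCycle → c'.IsCycle → G.Reachable u w) :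
    SubUnicyclic G :=
  fun _ _ _ _ hc hc' => hpf.mem_edges_iff_of_reachable hc hc' (hreach _ _ hc hc')

lemma Pseudoforest.subUnicyclic_of_preconnected (hpf : Pseudoforest G) (hG : G.Preconnected) :
    SubUnicyclic G :=
  hpf.subUnicyclic_of_reachable fun u w _ _ _ _ => hG u w

lemma SimpleGraph.Walk.IsCycle.exists_adj_adj_ne {u : V} {c : G.Walk u u} (hc : c.IsCycle) :
    ∃ a b, G.Adj u a ∧ G.Adj u b ∧ a ≠ b :=
  ⟨c.snd, c.penultimate, c.adj_snd hc.not_nil, (c.adj_penultimate hc.not_nil).symm,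
    hc.snd_ne_penultimate⟩

lemma NearlyBiconnected.connected (h : NearlyBiconnected G) : G.Connected := by
  obtain hbi | ⟨x, A, B, -, -, hAB, hABx, -, hA, ⟨eB⟩⟩ := h
  · exact hbi.1
  · have hB : (G.induce B).Connected := eB.connected_iff.2 connected_top
    have hunion := induce_union_connected hA.1.preconnected hB.preconnected
      (hABx ▸ Set.singleton_nonempty x)
    rw [hAB] at hunion
    exact (induceUnivIso G).connected_iff.1 hunion

/-- Once `x` is deleted, a vertex of the triangle `B` keeps at most one neighbour, so it lies on no
cycle. -/
lemma mem_of_isCycle_of_separation {x : V} {A B : Set V} (hAB : A ∪ B = Set.univ) (hxB : x ∈ B)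
    (hB : B.ncard = 3) (hsep : ∀ a ∈ A, ∀ b ∈ B, G.Adj a b → a = x ∨ b = x)
    {u : {y | y ≠ x}} {c : (G.induce {y | y ≠ x}).Walk u u} (hc : c.IsCycle) : (u : V) ∈ A := by
  have hmem : ∀ y : V, y ∈ A ∪ B := fun y => hAB ▸ Set.mem_univ y
  by_contra huA
  have huB : (u : V) ∈ B := (hmem u).resolve_left huA
  have hnbr : ∀ y : {y | y ≠ x}, (G.induce _).Adj u y → (y : V) ∈ B \ {x} := fun y hy =>
    ⟨(hmem y).resolve_left fun hyA => (hsep _ hyA _ huB hy.symm).elim y.2 u.2, y.2⟩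
  obtain ⟨a, b, hua, hub, hab⟩ := hc.exists_adj_adj_ne
  have hBfin : (B \ {x}).Finite := (Set.finite_of_ncard_ne_zero (by omega)).sdiff
  have hcard : 2 < (B \ {x}).ncard := (Set.two_lt_ncard_iff hBfin).2
    ⟨u, a, b, ⟨huB, u.2⟩, hnbr a hua, hnbr b hub, fun h => hua.ne (Subtype.ext h),
      fun h => hub.ne (Subtype.ext h), fun h => hab (Subtype.ext h)⟩
  rw [Set.ncard_sdiff_singleton_of_mem hxB, hB] at hcard
  omega

lemma reachable_of_isCycle_of_separation {x : V} {A B : Set V} (hAB : A ∪ B = Set.univ)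
    (hxA : x ∈ A) (hxB : x ∈ B) (hB : B.ncard = 3)
    (hsep : ∀ a ∈ A, ∀ b ∈ B, G.Adj a b → a = x ∨ b = x) (hA : Biconnected (G.induce A))
    {u w : {y | y ≠ x}} {c : (G.induce {y | y ≠ x}).Walk u u}
    {c' : (G.induce {y | y ≠ x}).Walk w w} (hc : c.IsCycle) (hc' : c'.IsCycle) :
    (G.induce {y | y ≠ x}).Reachable u w := by
  have huA := mem_of_isCycle_of_separation hAB hxB hB hsep hc
  have hwA := mem_of_isCycle_of_separation hAB hxB hB hsep hc'
  let φ : (G.induce A).induce {y | y ≠ ⟨x, hxA⟩} →g G.induce {y | y ≠ x} :=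
    induceHom (Embedding.induce A).toHom fun y hy h => hy (Subtype.ext h)
  exact ((hA.2 ⟨x, hxA⟩).preconnected ⟨⟨u, huA⟩, fun h => u.2 (congrArg Subtype.val h)⟩
    ⟨⟨w, hwA⟩, fun h => w.2 (congrArg Subtype.val h)⟩).map φ

lemma NearlyBiconnected.reachable_of_isCycle_induce_ne (h : NearlyBiconnected G) (v : V)
    {u w : {y | y ≠ v}} {c : (G.induce {y | y ≠ v}).Walk u u}
    {c' : (G.induce {y | y ≠ v}).Walk w w} (hc : c.IsCycle) (hc' : c'.IsCycle) :
    (G.induce {y | y ≠ v}).Reachable u w := by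
  obtain hbi | ⟨x, A, B, -, huniq, hAB, hABx, hsep, hA, ⟨eB⟩⟩ := h
  · exact (hbi.2 v).preconnected u w
  obtain rfl | hvx := eq_or_ne v x
  · have hxAB : v ∈ A ∩ B := hABx ▸ Set.mem_singleton v
    have hB : B.ncard = 3 := by
      rw [← Nat.card_coe_set_eq, Nat.card_congr eB.toEquiv, Nat.card_eq_fintype_card,
        Fintype.card_fin]
    exact reachable_of_isCycle_of_separation hAB hxAB.1 hxAB.2 hB hsep hA hc hc'
  · have hpre : (G.induce {y | y ≠ v}).Preconnected := not_not.1 fun hcut => hvx (huniq v hcut)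
    exact hpre u w

lemma NearlyBiconnected.subUnicyclic_of_pseudoforest [Finite V] (h : NearlyBiconnected G)
    {S : Set V} (hS : S.ncard ≤ 1) (hpf : Pseudoforest (G.induce Sᶜ)) :
    SubUnicyclic (G.induce Sᶜ) := by
  obtain rfl | ⟨v, rfl⟩ := (Set.ncard_le_one_iff_eq S.toFinite).1 hS
  · rw [Set.compl_empty] at hpf ⊢
    exact hpf.subUnicyclic_of_preconnected
      ((induceUnivIso G).connected_iff.2 h.connected).preconnected
  · exact hpf.subUnicyclic_of_reachable fun _ _ _ _ => h.reachable_of_isCycle_induce_ne v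

end

/-- a nearly-biconnected minor-obstruction for `1`-apex
sub-unicyclic graphs is also a minor-obstruction for `1`-apex pseudoforests. -/
theorem nearly_biconnected_obstruction {V : Type} [Finite V] (G : SimpleGraph V)
    (hnb : NearlyBiconnected G) (h : ObstructionSub 1 G) :
    ObstructionPseudo 1 G := by
  obtain ⟨hnot, hminor⟩ := h
  refine ⟨fun ⟨S, hS, hpf⟩ => hnot ⟨S, hS, hnb.subUnicyclic_of_pseudoforest hS hpf⟩, ?_⟩
  intro W H hHG hGH
  obtain ⟨S, hS, hsub⟩ := hminor W H hHG hGH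
  exact ⟨S, hS, hsub.pseudoforest⟩
end
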